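/- arXiv:2506.21175 — 15 statements merged into one kernel-verified Lean document; each statement's English description precedes it below -/
import Mathlib

section
/- For any permutation π of a multiset S = {s₁,…,sₙ} of real numbers, the sum of the absolute values of all prefix sums satisfies ∑_{i=1}^n |∑_{j=1}^i π(j)| ≥ (∑_{i=1}^n |sᵢ|)/2. -/
/-- For any permutation `π` of a multiset `S = {s 0, …, s (n-1)}` of reals,
the sum of absolute prefix sums is at least half the sum of absolute values. -/
theorem stmt_0 (n : ℕ) (s π : ℕ → ℝ)
    (hperm : Multiset.map π (Multiset.range n) = Multiset.map s (Multiset.range n)) :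
    ∑ i ∈ Finset.range n, |∑ j ∈ Finset.range (i + 1), π j| ≥
      (∑ i ∈ Finset.range n, |s i|) / 2 := by
  set P : ℕ → ℝ := fun i => ∑ j ∈ Finset.range i, π j with hP
  -- ∑ |s i| = ∑ |π i|
  have hsum : ∑ i ∈ Finset.range n, |s i| = ∑ i ∈ Finset.range n, |π i| := by
    have : (Multiset.map s (Multiset.range n)).map abs
        = (Multiset.map π (Multiset.range n)).map abs := by rw [hperm]
    have h2 := congrArg Multiset.sum this
    simpa [Multiset.map_map, Function.comp, Finset.sum_range, Finset.sum,
      Finset.range] using h2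
  -- |π i| ≤ |P (i+1)| + |P i|
  have key : ∀ i, |π i| ≤ |P (i + 1)| + |P i| := by
    intro i
    have : π i = P (i + 1) - P i := by
      simp [hP, Finset.sum_range_succ]
    rw [this]
    exact abs_sub _ _
  have h1 : ∑ i ∈ Finset.range n, |π i|
      ≤ ∑ i ∈ Finset.range n, |P (i + 1)| + ∑ i ∈ Finset.range n, |P i| := by
    rw [← Finset.sum_add_distrib]
    exact Finset.sum_le_sum fun i _ => key i
  have h2 : ∑ i ∈ Finset.range n, |P i| ≤ ∑ i ∈ Finset.range n, |P (i + 1)| := by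
    cases n with
    | zero => simp
    | succ m =>
      rw [Finset.sum_range_succ', add_comm]
      have hP0 : |P 0| = 0 := by simp [hP]
      rw [hP0, zero_add]
      refine Finset.sum_le_sum_of_subset_of_nonneg ?_ ?_
      · exact Finset.range_subset_range.2 (Nat.le_succ m)
      · intro i _ _; exact abs_nonneg _
  have : ∑ i ∈ Finset.range n, |s i| ≤ 2 * ∑ i ∈ Finset.range n, |P (i + 1)| := by
    rw [hsum]; linarith
  have hgoal : ∑ i ∈ Finset.range n, |∑ j ∈ Finset.range (i + 1), π j|
      = ∑ i ∈ Finset.range n, |P (i + 1)| := rfl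
  rw [ge_iff_le, div_le_iff₀ (by norm_num : (0:ℝ) < 2), hgoal]
  linarith
end

section
/- Let π be a permutation of real numbers s₁,…,sₙ with ∑ sᵢ = 0. Then there exists j ∈ [n] with |P_j^π| + |P_{j-1}^π| > |π(j)| if and only if ∑_{i=1}^n |P_i^π| > (∑_{i=1}^n |sᵢ|)/2. -/
/-- For a permutation `π` of reals summing to zero, there exists `j ∈ [n]`
with `|P_j| + |P_{j-1}| > |π j|` iff the sum of absolute prefix sums strictly
exceeds `(∑ |s i|)/2`. (0-based indexing.) -/
theorem stmt_2 (n : ℕ) (s π : ℕ → ℝ)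
    (hperm : Multiset.map π (Multiset.range n) = Multiset.map s (Multiset.range n))
    (hsum : ∑ i ∈ Finset.range n, s i = 0) :
    (∃ j < n, |∑ k ∈ Finset.range (j + 1), π k| + |∑ k ∈ Finset.range j, π k| > |π j|) ↔
      ∑ i ∈ Finset.range n, |∑ j ∈ Finset.range (i + 1), π j| >
        (∑ i ∈ Finset.range n, |s i|) / 2 := by
  set P : ℕ → ℝ := fun i => ∑ k ∈ Finset.range i, π k with hP
  have hπsum : ∑ i ∈ Finset.range n, π i = ∑ i ∈ Finset.range n, s i := by
    have := congrArg Multiset.sum hperm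
    simpa [Finset.sum] using this
  have habs : ∑ i ∈ Finset.range n, |π i| = ∑ i ∈ Finset.range n, |s i| := by
    have := congrArg (fun m => (Multiset.map (fun x : ℝ => |x|) m).sum) hperm
    simpa [Finset.sum, Multiset.map_map, Function.comp] using this
  have hPn : P n = 0 := by simp only [hP]; rw [hπsum, hsum]
  have hP0 : P 0 = 0 := by simp [hP]
  have htri : ∀ j, |π j| ≤ |P (j + 1)| + |P j| := by
    intro j
    have hπeq : π j = P (j + 1) - P j := by
      simp [hP, Finset.sum_range_succ]
    rw [hπeq]
    exact abs_sub _ _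
  have hshift : ∑ j ∈ Finset.range n, |P j| = ∑ j ∈ Finset.range n, |P (j + 1)| := by
    have h1 := Finset.sum_range_succ (fun j => |P j|) n
    have h2 := Finset.sum_range_succ' (fun j => |P j|) n
    rw [h1] at h2
    simpa [hPn, hP0] using h2
  have key : ∑ j ∈ Finset.range n, (|P (j + 1)| + |P j|)
      = 2 * ∑ i ∈ Finset.range n, |P (i + 1)| := by
    rw [Finset.sum_add_distrib, hshift]; ring
  constructor
  · rintro ⟨j, hj, h⟩
    have hlt : ∑ j ∈ Finset.range n, |π j|
        < ∑ j ∈ Finset.range n, (|P (j + 1)| + |P j|) :=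
      Finset.sum_lt_sum (fun i _ => htri i) ⟨j, Finset.mem_range.2 hj, h⟩
    rw [key, habs] at hlt
    linarith
  · intro h
    by_contra hc
    push_neg at hc
    have hle : ∑ j ∈ Finset.range n, (|P (j + 1)| + |P j|)
        ≤ ∑ j ∈ Finset.range n, |π j| :=
      Finset.sum_le_sum (fun i hi => hc i (Finset.mem_range.1 hi))
    rw [key, habs] at hle
    linarith
end

section
/- Let S be a multiset of n nonzero real numbers with ∑ S = 0, n ≡ 0 (mod 3), exactly 2n/3 positive elements, and exactly n/3 negative elements (a 'nice' instance). If π is a bound-achieving permutation of S (i.e., ∑_{i=1}^n |P_i^π| = (∑_{s∈S}|s|)/2), then at least one of π(1), π(2) is negative and at least one of π(n−1), π(n) is negative. -/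
/-- For a nice instance (sum zero, `n ≡ 0 mod 3`, nonzero elements,
exactly `2n/3` positive and `n/3` negative elements) and a bound-achieving
permutation `π`, at least one of `π 0, π 1` is negative and at least one of
`π (n-2), π (n-1)` is negative (0-based indexing of positions `1,2` and `n-1,n`). -/
theorem stmt_3 (n : ℕ) (hn : 0 < n) (s π : ℕ → ℝ)
    (hperm : Multiset.map π (Multiset.range n) = Multiset.map s (Multiset.range n))
    (hsum : ∑ i ∈ Finset.range n, s i = 0)
    (hmod : n % 3 = 0)
    (hnz : ∀ i < n, s i ≠ 0)
    (hposcard : 3 * ((Finset.range n).filter (fun i => 0 < s i)).card = 2 * n)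
    (hnegcard : 3 * ((Finset.range n).filter (fun i => s i < 0)).card = n)
    (hopt : ∑ i ∈ Finset.range n, |∑ j ∈ Finset.range (i + 1), π j| =
      (∑ i ∈ Finset.range n, |s i|) / 2) :
    (π 0 < 0 ∨ π 1 < 0) ∧ (π (n - 2) < 0 ∨ π (n - 1) < 0) := by
  have hmap : ∀ f : ℝ → ℝ, ∑ i ∈ Finset.range n, f (π i) = ∑ i ∈ Finset.range n, f (s i) := by
    intro f
    have := congrArg (fun m => (Multiset.map f m).sum) hperm
    simpa [Multiset.map_map, Finset.sum, Function.comp] using this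
  have hπnz : ∀ i < n, π i ≠ 0 := by
    intro i hi
    have hmem : π i ∈ Multiset.map s (Multiset.range n) := by
      rw [← hperm]
      exact Multiset.mem_map_of_mem _ (by simpa using hi)
    obtain ⟨j, hj, hji⟩ := Multiset.mem_map.1 hmem
    rw [← hji]
    exact hnz j (by simpa using hj)
  set Q : ℕ → ℝ := fun i => ∑ j ∈ Finset.range i, π j with hQdef
  have hQ0 : Q 0 = 0 := by simp [hQdef]
  have hQn : Q n = 0 := by
    have := hmap id
    simpa [hQdef, hsum] using this
  have hstep : ∀ i, Q (i + 1) = Q i + π i := by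
    intro i; simp [hQdef, Finset.sum_range_succ]
  have hT : ∑ i ∈ Finset.range n, |π i| = ∑ i ∈ Finset.range n, |s i| := hmap abs
  -- the sum of |Q (i+1)| over i < n is T/2
  have hopt' : ∑ i ∈ Finset.range n, |Q (i + 1)| = (∑ i ∈ Finset.range n, |s i|) / 2 := hopt
  -- shifted sum
  have hshift : ∑ i ∈ Finset.range n, |Q i| = ∑ i ∈ Finset.range n, |Q (i + 1)| := by
    have h1 : ∑ i ∈ Finset.range (n + 1), |Q i|
        = ∑ i ∈ Finset.range n, |Q i| + |Q n| := Finset.sum_range_succ _ _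
    have h2 : ∑ i ∈ Finset.range (n + 1), |Q i|
        = ∑ i ∈ Finset.range n, |Q (i + 1)| + |Q 0| := Finset.sum_range_succ' _ _
    rw [hQ0, hQn] at *
    simp at h1 h2
    linarith [h1, h2]
  have hsum0 : ∑ i ∈ Finset.range n, ((|Q i| + |Q (i + 1)|) - |π i|) = 0 := by
    rw [Finset.sum_sub_distrib, Finset.sum_add_distrib, hshift, hopt', hT]
    ring
  have hkey : ∀ i < n, Q i * Q (i + 1) ≤ 0 := by
    intro i hi
    have hterm : (|Q i| + |Q (i + 1)|) - |π i| = 0 := by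
      have := (Finset.sum_eq_zero_iff_of_nonneg ?_).1 hsum0 i (Finset.mem_range.2 hi)
      · exact this
      · intro j _
        have : |Q (j + 1) - Q j| ≤ |Q (j + 1)| + |Q j| := abs_sub _ _
        have hπj : π j = Q (j + 1) - Q j := by rw [hstep]; ring
        rw [hπj]
        linarith
    have heq : |Q i| + |Q (i + 1)| = |Q (i + 1) - Q i| := by
      have hπi : π i = Q (i + 1) - Q i := by rw [hstep]; ring
      rw [hπi] at hterm; linarith
    by_contra hcon
    push_neg at hcon
    rcases mul_pos_iff.1 hcon with ⟨h1, h2⟩ | ⟨h1, h2⟩ <;>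
      rcases abs_cases (Q (i + 1) - Q i) with ⟨he, _⟩ | ⟨he, _⟩ <;>
      rcases abs_cases (Q i) with ⟨ha, _⟩ | ⟨ha, _⟩ <;>
      rcases abs_cases (Q (i + 1)) with ⟨hb, _⟩ | ⟨hb, _⟩ <;>
      rw [he, ha, hb] at heq <;> linarith
  have h3 : 3 ≤ n := Nat.le_of_dvd hn (Nat.dvd_of_mod_eq_zero hmod)
  obtain ⟨m, rfl⟩ : ∃ m, n = m + 3 := ⟨n - 3, by omega⟩
  have hQ1 : Q 1 = π 0 := by rw [hstep, hQ0]; ring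
  have hQ2 : Q 2 = π 0 + π 1 := by rw [hstep, hQ1]
  have hk1 : Q 1 * Q 2 ≤ 0 := hkey 1 (by omega)
  have hQm2 : Q (m + 2) = -π (m + 2) := by
    have := hstep (m + 2)
    rw [show m + 2 + 1 = m + 3 from rfl, hQn] at this
    linarith
  have hQm1 : Q (m + 1) = -π (m + 2) - π (m + 1) := by
    have := hstep (m + 1)
    rw [hQm2] at this
    linarith
  have hk2 : Q (m + 1) * Q (m + 2) ≤ 0 := hkey (m + 1) (by omega)
  constructor
  · rcases (hπnz 0 (by omega)).lt_or_gt with h | h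
    · exact Or.inl h
    · right
      rw [hQ1, hQ2] at hk1
      nlinarith [hk1, h]
  · have e2 : m + 3 - 2 = m + 1 := by omega
    have e1 : m + 3 - 1 = m + 2 := by omega
    rw [e2, e1]
    rcases (hπnz (m + 2) (by omega)).lt_or_gt with h | h
    · exact Or.inr h
    · left
      rw [hQm1, hQm2] at hk2
      nlinarith [hk2, h]
end

section
/- Let S be a nice instance (∑ S = 0, n ≡ 0 mod 3, exactly 2n/3 positive and n/3 negative elements, no zeros) and π a bound-achieving permutation of S. If for some i ∈ [n−1] the elements π(i) and π(i+1) are both positive or both negative, then P_i^π = 0. -/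
lemma stmt4_aux (a b : ℝ) (h : |b - a| = |a| + |b|) : a * b ≤ 0 := by
  have h2 : (b - a) ^ 2 = (|a| + |b|) ^ 2 := by rw [← sq_abs (b - a), h]
  nlinarith [mul_nonneg (abs_nonneg a) (abs_nonneg b), sq_abs a, sq_abs b]

/-- For a nice instance and a bound-achieving permutation `π`, if two
consecutive elements `π i, π (i+1)` (0-based) are both positive or both negative,
then the prefix sum up to and including `π i` is zero. -/
theorem stmt_4 (n : ℕ) (s π : ℕ → ℝ)
    (hperm : Multiset.map π (Multiset.range n) = Multiset.map s (Multiset.range n))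
    (hsum : ∑ i ∈ Finset.range n, s i = 0)
    (hmod : n % 3 = 0)
    (hnz : ∀ i < n, s i ≠ 0)
    (hposcard : 3 * ((Finset.range n).filter (fun i => 0 < s i)).card = 2 * n)
    (hnegcard : 3 * ((Finset.range n).filter (fun i => s i < 0)).card = n)
    (hopt : ∑ i ∈ Finset.range n, |∑ j ∈ Finset.range (i + 1), π j| =
      (∑ i ∈ Finset.range n, |s i|) / 2)
    (i : ℕ) (hi : i + 1 < n)
    (hsign : (0 < π i ∧ 0 < π (i + 1)) ∨ (π i < 0 ∧ π (i + 1) < 0)) :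
    ∑ j ∈ Finset.range (i + 1), π j = 0 := by
  set Q : ℕ → ℝ := fun k => ∑ j ∈ Finset.range k, π j with hQ
  -- sums over range as multiset sums
  have hms : ∀ f : ℕ → ℝ, ∑ k ∈ Finset.range n, f k = (Multiset.map f (Multiset.range n)).sum := by
    intro f
    rw [Finset.sum_eq_multiset_sum, Finset.range_val]
  -- total sum of π is 0
  have hsumπ : ∑ k ∈ Finset.range n, π k = 0 := by
    rw [hms, hperm, ← hms]; exact hsum
  -- sum of |π| equals sum of |s|
  have habs : ∑ k ∈ Finset.range n, |π k| = ∑ k ∈ Finset.range n, |s k| := by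
    rw [hms, hms]
    have := congrArg (Multiset.map (fun x : ℝ => |x|)) hperm
    simpa [Multiset.map_map, Function.comp] using congrArg Multiset.sum this
  -- Q step
  have hstep : ∀ k, Q (k + 1) = Q k + π k := fun k => Finset.sum_range_succ π k
  have hQ0 : Q 0 = 0 := Finset.sum_range_zero π
  have hQn : Q n = 0 := hsumπ
  -- shift identity
  obtain ⟨m, rfl⟩ : ∃ m, n = m + 1 := ⟨n - 1, by omega⟩
  have hshift : ∑ k ∈ Finset.range (m + 1), |Q k| = ∑ k ∈ Finset.range (m + 1), |Q (k + 1)| := by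
    rw [Finset.sum_range_succ' (fun k => |Q k|) m, Finset.sum_range_succ (fun k => |Q (k + 1)|) m]
    simp [hQ0, hQn]
  have hoptQ : ∑ k ∈ Finset.range (m + 1), |Q (k + 1)| =
      (∑ k ∈ Finset.range (m + 1), |s k|) / 2 := hopt
  -- termwise equality
  have key : ∀ k ∈ Finset.range (m + 1), |Q k| + |Q (k + 1)| - |π k| = 0 := by
    have hnonneg : ∀ k ∈ Finset.range (m + 1), 0 ≤ |Q k| + |Q (k + 1)| - |π k| := by
      intro k _
      have : π k = Q (k + 1) - Q k := by rw [hstep k]; ring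
      rw [this]
      have := abs_sub (Q (k + 1)) (Q k)
      linarith
    have hzero : ∑ k ∈ Finset.range (m + 1), (|Q k| + |Q (k + 1)| - |π k|) = 0 := by
      rw [Finset.sum_sub_distrib, Finset.sum_add_distrib, hshift, hoptQ, habs]
      ring
    intro k hk
    exact (Finset.sum_eq_zero_iff_of_nonneg hnonneg).mp hzero k hk
  have hk1 := key i (Finset.mem_range.mpr (by omega))
  have hk2 := key (i + 1) (Finset.mem_range.mpr (by omega))
  have hπi : π i = Q (i + 1) - Q i := by rw [hstep i]; ring
  have hπi1 : π (i + 1) = Q (i + 2) - Q (i + 1) := by rw [hstep (i + 1)]; ring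
  have hmul1 : Q i * Q (i + 1) ≤ 0 := by
    apply stmt4_aux
    rw [← hπi]; linarith [abs_nonneg (π i)]
  have hmul2 : Q (i + 1) * Q (i + 2) ≤ 0 := by
    apply stmt4_aux
    rw [← hπi1]; linarith [abs_nonneg (π (i + 1))]
  show Q (i + 1) = 0
  by_contra hne
  rcases lt_or_gt_of_ne hne with hneg | hpos
  · rcases hsign with ⟨h1, h2⟩ | ⟨h1, h2⟩
    · nlinarith
    · nlinarith
  · rcases hsign with ⟨h1, h2⟩ | ⟨h1, h2⟩
    · nlinarith
    · nlinarith
end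

section
/- Let S be a nice instance and π a bound-achieving permutation of S. Then there exists no index i ∈ [n−2] such that π(i), π(i+1), π(i+2) are all positive or all negative. -/
lemma opp_sign {a b : ℝ} (h : |b - a| = |a| + |b|) : a * b ≤ 0 := by
  by_contra hc
  push_neg at hc
  rcases mul_pos_iff.mp hc with ⟨ha, hb⟩ | ⟨ha, hb⟩
  · rw [abs_of_pos ha, abs_of_pos hb] at h
    rcases abs_cases (b - a) with ⟨h1, _⟩ | ⟨h1, _⟩ <;> linarith
  · rw [abs_of_neg ha, abs_of_neg hb] at h
    rcases abs_cases (b - a) with ⟨h1, _⟩ | ⟨h1, _⟩ <;> linarith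

/-- For a nice instance and a bound-achieving permutation `π`, there is
no index `i` (0-based, `i+2 < n`) with `π i, π (i+1), π (i+2)` all positive or
all negative. -/
theorem stmt_5 (n : ℕ) (s π : ℕ → ℝ)
    (hperm : Multiset.map π (Multiset.range n) = Multiset.map s (Multiset.range n))
    (hsum : ∑ i ∈ Finset.range n, s i = 0)
    (hmod : n % 3 = 0)
    (hnz : ∀ i < n, s i ≠ 0)
    (hposcard : 3 * ((Finset.range n).filter (fun i => 0 < s i)).card = 2 * n)
    (hnegcard : 3 * ((Finset.range n).filter (fun i => s i < 0)).card = n)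
    (hopt : ∑ i ∈ Finset.range n, |∑ j ∈ Finset.range (i + 1), π j| =
      (∑ i ∈ Finset.range n, |s i|) / 2) :
    ¬ ∃ i, i + 2 < n ∧
      ((0 < π i ∧ 0 < π (i + 1) ∧ 0 < π (i + 2)) ∨
        (π i < 0 ∧ π (i + 1) < 0 ∧ π (i + 2) < 0)) := by
  rintro ⟨i, hin, hsgn⟩
  set Q : ℕ → ℝ := fun k => ∑ j ∈ Finset.range k, π j with hQ
  have hQ0 : Q 0 = 0 := by simp [hQ]
  have hQsucc : ∀ k, Q (k+1) = Q k + π k := by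
    intro k; simp [hQ, Finset.sum_range_succ]
  have hsum_eq : ∀ f : ℝ → ℝ, ∑ j ∈ Finset.range n, f (π j) = ∑ j ∈ Finset.range n, f (s j) := by
    intro f
    have := congrArg (fun m => (m.map f).sum) hperm
    simpa [Multiset.map_map, Finset.sum, Function.comp] using this
  have hQn : Q n = 0 := by
    have := hsum_eq id
    simpa [hQ, hsum] using this
  have habs : ∑ j ∈ Finset.range n, |π j| = ∑ j ∈ Finset.range n, |s j| := hsum_eq abs
  have hpoint : ∀ k ∈ Finset.range n, |π k| ≤ |Q k| + |Q (k+1)| := by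
    intro k _
    have : π k = Q (k+1) - Q k := by rw [hQsucc]; ring
    rw [this]
    calc |Q (k+1) - Q k| ≤ |Q (k+1)| + |Q k| := abs_sub _ _
      _ = |Q k| + |Q (k+1)| := add_comm _ _
  obtain ⟨m, rfl⟩ : ∃ m, n = m + 1 := ⟨n - 1, by omega⟩
  have hshift : ∑ k ∈ Finset.range (m+1), |Q k| = ∑ k ∈ Finset.range (m+1), |Q (k+1)| := by
    rw [Finset.sum_range_succ', Finset.sum_range_succ, hQ0, hQn]
  have htot : ∑ k ∈ Finset.range (m+1), (|Q k| + |Q (k+1)|) = ∑ k ∈ Finset.range (m+1), |π k| := by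
    rw [Finset.sum_add_distrib, hshift, habs]
    have hopt' : ∑ k ∈ Finset.range (m+1), |Q (k+1)| =
        (∑ j ∈ Finset.range (m+1), |s j|) / 2 := hopt
    rw [hopt']
    ring
  have heq : ∀ k ∈ Finset.range (m+1), |π k| = |Q k| + |Q (k+1)| :=
    (Finset.sum_eq_sum_iff_of_le hpoint).mp htot.symm
  have hle : ∀ k, k < m + 1 → Q k * Q (k+1) ≤ 0 := by
    intro k hk
    apply opp_sign
    have h := heq k (Finset.mem_range.mpr hk)
    have hπ : π k = Q (k+1) - Q k := by rw [hQsucc]; ring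
    rw [hπ] at h
    exact h
  have h1 := hle i (by omega)
  have h2 := hle (i+1) (by omega)
  have h3 := hle (i+2) (by omega)
  have e1 := hQsucc i
  have e2 := hQsucc (i+1)
  have e3 := hQsucc (i+2)
  rcases hsgn with ⟨p1, p2, p3⟩ | ⟨p1, p2, p3⟩
  · rcases lt_trichotomy (Q (i+1)) 0 with hq | hq | hq
    · have hqi : Q i < 0 := by linarith
      nlinarith [mul_pos_of_neg_of_neg hqi hq]
    · have hq2 : 0 < Q (i+2) := by rw [e2, hq]; linarith
      have hq3 : 0 < Q (i+3) := by rw [e3]; linarith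
      nlinarith [mul_pos hq2 hq3]
    · have hq2 : 0 < Q (i+2) := by rw [e2]; linarith
      nlinarith [mul_pos hq hq2]
  · rcases lt_trichotomy (Q (i+1)) 0 with hq | hq | hq
    · have hq2 : Q (i+2) < 0 := by rw [e2]; linarith
      nlinarith [mul_pos_of_neg_of_neg hq hq2]
    · have hq2 : Q (i+2) < 0 := by rw [e2, hq]; linarith
      have hq3 : Q (i+3) < 0 := by rw [e3]; linarith
      nlinarith [mul_pos_of_neg_of_neg hq2 hq3]
    · have hqi : 0 < Q i := by linarith
      nlinarith [mul_pos hqi hq]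
end

section
/- Given multisets X, Y, Z of k positive integers each with each element smaller than b = (∑_{e∈X∪Y∪Z} e)/k, define S = {x : x ∈ X} ∪ {y + 2b : y ∈ Y} ∪ {z − 3b : z ∈ Z}. Then there exists a subset M ⊆ X×Y×Z in which every element of X, Y, Z appears in exactly one triple and x+y+z = b for each (x,y,z) ∈ M, if and only if there exists a permutation π of S with ∑_{i=1}^{3k} |P_i^π| = (∑_{s∈S} |s|)/2. -/
private def Pre (π : ℕ → ℤ) (t : ℕ) : ℤ := ∑ j ∈ Finset.range t, π j

private lemma Pre_succ (π : ℕ → ℤ) (s : ℕ) : Pre π (s+1) = Pre π s + π s :=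
  Finset.sum_range_succ _ _

private def dcnt (π : ℕ → ℤ) (n t : ℕ) : ℕ :=
  ((Finset.Ico t n).filter (fun i => π i < 0)).card

private lemma gap_facts (π : ℕ → ℤ) (n : ℕ)
    (hne : ∀ i, i < n → π i ≠ 0)
    (hup : ∀ i, i < n → 0 < π i → Pre π i ≤ 0 ∧ 0 ≤ Pre π (i+1))
    (hPn : Pre π n = 0)
    (t : ℕ) (htn : t < n) (ht : Pre π t = 0) :
    ∃ t', t < t' ∧ t' ≤ n ∧ Pre π t' = 0 ∧ (∀ i, t < i → i < t' → Pre π i ≠ 0) ∧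
      1 ≤ ((Finset.Ico t t').filter (fun i => π i < 0)).card ∧
      t' - t ≤ 2 * ((Finset.Ico t t').filter (fun i => π i < 0)).card + 1 ∧
      dcnt π n t = ((Finset.Ico t t').filter (fun i => π i < 0)).card + dcnt π n t' := by
  classical
  have hex : ∃ i, t < i ∧ i ≤ n ∧ Pre π i = 0 := ⟨n, htn, le_rfl, hPn⟩
  obtain ⟨ht1, ht2, ht3⟩ := Nat.find_spec hex
  set t' := Nat.find hex with ht'
  have hmin : ∀ i, t < i → i < t' → Pre π i ≠ 0 := fun i hi1 hi2 h0 =>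
    Nat.find_min hex hi2 ⟨hi1, by omega, h0⟩
  set D := (Finset.Ico t t').filter (fun i => π i < 0) with hD
  have hlen2 : t + 2 ≤ t' := by
    by_contra h
    have : t' = t + 1 := by omega
    have : π t = 0 := by
      have := Pre_succ π t
      rw [ht, zero_add] at this
      rw [← this, ← ‹t' = t + 1›, ht3]
    exact hne t htn this
  have hd1 : 1 ≤ D.card := by
    rcases lt_trichotomy (π t) 0 with h | h | h
    · exact Finset.card_pos.2 ⟨t, Finset.mem_filter.2 ⟨Finset.mem_Ico.2 ⟨le_rfl, ht1⟩, h⟩⟩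
    · exact absurd h (hne t htn)
    · rcases lt_trichotomy (π (t+1)) 0 with h2 | h2 | h2
      · exact Finset.card_pos.2 ⟨t+1, Finset.mem_filter.2
          ⟨Finset.mem_Ico.2 ⟨by omega, by omega⟩, h2⟩⟩
      · exact absurd h2 (hne (t+1) (by omega))
      · exfalso
        have e1 := (hup t htn h).2
        have e2 := (hup (t+1) (by omega) h2).1
        exact hmin (t+1) (by omega) (by omega) (le_antisymm e2 e1)
  have hinj : ((Finset.Ico (t+1) t').filter fun i => 0 < π i).card ≤ D.card := by
    apply Finset.card_le_card_of_injOn (fun i => i - 1)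
    · intro i hi
      obtain ⟨hmem, hpos⟩ := Finset.mem_filter.1 hi
      obtain ⟨hi1, hi2⟩ := Finset.mem_Ico.1 hmem
      obtain ⟨j, rfl⟩ : ∃ j, i = j + 1 := ⟨i - 1, by omega⟩
      have hjn : j < n := by omega
      have hPi : Pre π (j+1) < 0 := by
        have h1 := (hup (j+1) (by omega) hpos).1
        have h2 := hmin (j+1) (by omega) hi2
        omega
      have hπj : π j < 0 := by
        rcases lt_trichotomy (π j) 0 with h | h | h
        · exact h
        · exact absurd h (hne j hjn)
        · have := (hup j hjn h).2
          omega
      have hjD : j ∈ D := Finset.mem_filter.2 ⟨Finset.mem_Ico.2 ⟨by omega, by omega⟩, hπj⟩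
      simpa using hjD
    · intro i hi j hj hij
      obtain ⟨hmi, _⟩ := Finset.mem_filter.1 hi
      obtain ⟨hmj, _⟩ := Finset.mem_filter.1 hj
      have h1 := (Finset.mem_Ico.1 hmi).1
      have h2 := (Finset.mem_Ico.1 hmj).1
      have hij' : i - 1 = j - 1 := hij
      omega
  have hsplit : (Finset.Ico t t').card =
      D.card + ((Finset.Ico t t').filter fun i => 0 < π i).card := by
    have hfc : (Finset.Ico t t').filter (fun a => ¬ π a < 0) =
        (Finset.Ico t t').filter (fun i => 0 < π i) := by
      apply Finset.filter_congr
      intro i hi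
      obtain ⟨_, hi2⟩ := Finset.mem_Ico.1 hi
      have := hne i (by omega)
      constructor
      · intro h; omega
      · intro h; omega
    rw [hD, ← Finset.card_filter_add_card_filter_not (p := fun i => π i < 0), hfc]
  have hsub : ((Finset.Ico t t').filter fun i => 0 < π i).card ≤
      1 + ((Finset.Ico (t+1) t').filter fun i => 0 < π i).card := by
    have hsubset : (Finset.Ico t t').filter (fun i => 0 < π i) ⊆
        insert t ((Finset.Ico (t+1) t').filter fun i => 0 < π i) := by
      intro i hi
      obtain ⟨hmem, hpos⟩ := Finset.mem_filter.1 hi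
      obtain ⟨hi1, hi2⟩ := Finset.mem_Ico.1 hmem
      rcases eq_or_lt_of_le hi1 with rfl | h
      · exact Finset.mem_insert_self _ _
      · exact Finset.mem_insert_of_mem (Finset.mem_filter.2
          ⟨Finset.mem_Ico.2 ⟨by omega, hi2⟩, hpos⟩)
    have h1 := Finset.card_le_card hsubset
    have h2 := Finset.card_insert_le t ((Finset.Ico (t+1) t').filter fun i => 0 < π i)
    omega
  have hcard_Ico : (Finset.Ico t t').card = t' - t := Nat.card_Ico t t'
  have hdsplit : dcnt π n t = D.card + dcnt π n t' := by
    rw [dcnt, dcnt, ← Finset.Ico_union_Ico_eq_Ico (by omega : t ≤ t') ht2,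
      Finset.filter_union, Finset.card_union_of_disjoint
        (Finset.disjoint_filter_filter (Finset.Ico_disjoint_Ico_consecutive t t' n))]
  have hDcard : D.card = ((Finset.Ico t t').filter (fun i => π i < 0)).card := rfl
  exact ⟨t', ht1, ht2, ht3, hmin, by omega, by omega, by omega⟩

private lemma main_ineq (π : ℕ → ℤ) (n : ℕ)
    (hne : ∀ i, i < n → π i ≠ 0)
    (hup : ∀ i, i < n → 0 < π i → Pre π i ≤ 0 ∧ 0 ≤ Pre π (i+1))
    (hPn : Pre π n = 0) :
    ∀ fuel t, n - t ≤ fuel → t ≤ n → Pre π t = 0 → n - t ≤ 3 * dcnt π n t := by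
  intro fuel
  induction fuel with
  | zero => intro t hf _ _; omega
  | succ fuel ih =>
      intro t hf htn ht
      rcases eq_or_lt_of_le htn with rfl | hlt
      · omega
      · obtain ⟨t', ht1, ht2, ht3, _, hd1, hlen, hdsplit⟩ :=
          gap_facts π n hne hup hPn t hlt ht
        have := ih t' (by omega) ht2 ht3
        omega

private lemma refined (π : ℕ → ℤ) (n : ℕ)
    (hne : ∀ i, i < n → π i ≠ 0)
    (hup : ∀ i, i < n → 0 < π i → Pre π i ≤ 0 ∧ 0 ≤ Pre π (i+1))
    (hPn : Pre π n = 0)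
    (t : ℕ) (htn : t < n) (ht : Pre π t = 0) (heq : n - t = 3 * dcnt π n t) :
    0 < π t ∧ π (t+1) < 0 ∧ 0 < π (t+2) ∧ π t + π (t+1) + π (t+2) = 0 ∧
      t + 3 ≤ n ∧ Pre π (t+3) = 0 ∧ n - (t+3) = 3 * dcnt π n (t+3) := by
  obtain ⟨t', ht1, ht2, ht3, hmin, hd1, hlen, hdsplit⟩ :=
    gap_facts π n hne hup hPn t htn ht
  have hihe := main_ineq π n hne hup hPn n t' (by omega) ht2 ht3
  set D := (Finset.Ico t t').filter (fun i => π i < 0) with hD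
  have hDcard : D.card = ((Finset.Ico t t').filter (fun i => π i < 0)).card := rfl
  have hDone : D.card = 1 := by omega
  have ht'3 : t' = t + 3 := by omega
  have hpair : ∀ i j, t ≤ i → i < j → j < t' → π i < 0 → π j < 0 → False := by
    intro i j hi hij hj hπi hπj
    have hsub2 : ({i, j} : Finset ℕ) ⊆ D := by
      intro x hx
      rcases Finset.mem_insert.1 hx with rfl | hx
      · exact Finset.mem_filter.2 ⟨Finset.mem_Ico.2 ⟨hi, by omega⟩, hπi⟩
      · rw [Finset.mem_singleton.1 hx]
        exact Finset.mem_filter.2 ⟨Finset.mem_Ico.2 ⟨by omega, hj⟩, hπj⟩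
    have hc2 : ({i, j} : Finset ℕ).card = 2 := by
      rw [Finset.card_insert_of_notMem (by simp; omega), Finset.card_singleton]
    have := Finset.card_le_card hsub2
    omega
  have h0n : t < n := htn
  have h1n : t + 1 < n := by omega
  have h2n : t + 2 < n := by omega
  have hπ1 : π (t+1) < 0 ∨ (0 < π t ∧ 0 < π (t+1)) → True := fun _ => trivial
  -- establish signs
  have hst : 0 < π t := by
    rcases lt_trichotomy (π t) 0 with h | h | h
    · exfalso
      rcases lt_trichotomy (π (t+1)) 0 with h2 | h2 | h2
      · exact hpair t (t+1) le_rfl (by omega) (by omega) h h2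
      · exact hne (t+1) h1n h2
      · have e1 := (hup (t+1) h1n h2).2
        rcases lt_trichotomy (π (t+2)) 0 with h3 | h3 | h3
        · exact hpair t (t+2) le_rfl (by omega) (by omega) h h3
        · exact hne (t+2) h2n h3
        · have e2 := (hup (t+2) h2n h3).1
          exact hmin (t+2) (by omega) (by omega) (le_antisymm e2 e1)
    · exact absurd h (hne t h0n)
    · exact h
  have hst1 : π (t+1) < 0 := by
    rcases lt_trichotomy (π (t+1)) 0 with h | h | h
    · exact h
    · exact absurd h (hne (t+1) h1n)
    · exfalso
      have e1 := (hup t h0n hst).2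
      have e2 := (hup (t+1) h1n h).1
      exact hmin (t+1) (by omega) (by omega) (le_antisymm e2 e1)
  have hst2 : 0 < π (t+2) := by
    rcases lt_trichotomy (π (t+2)) 0 with h | h | h
    · exact absurd (hpair (t+1) (t+2) (by omega) (by omega) (by omega) hst1 h) (fun x => x)
    · exact absurd h (hne (t+2) h2n)
    · exact h
  have hPsum : Pre π (t+3) = Pre π t + π t + π (t+1) + π (t+2) := by
    rw [show t+3 = (t+2)+1 by ring, Pre_succ, show t+2 = (t+1)+1 by ring, Pre_succ, Pre_succ]
  have hP3 : Pre π (t+3) = 0 := by rw [← ht'3]; exact ht3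
  have hd3 : dcnt π n t' = dcnt π n (t+3) := by rw [ht'3]
  refine ⟨hst, hst1, hst2, by rw [hPsum, ht] at hP3; linarith, by omega, hP3, by omega⟩

private lemma filter_three (p : ℤ → Prop) [DecidablePred p] (A1 B1 C1 A2 B2 C2 : Multiset ℤ)
    (h : A1 + B1 + C1 = A2 + B2 + C2)
    (hA1 : ∀ x ∈ A1, p x) (hB1 : ∀ x ∈ B1, ¬ p x) (hC1 : ∀ x ∈ C1, ¬ p x)
    (hA2 : ∀ x ∈ A2, p x) (hB2 : ∀ x ∈ B2, ¬ p x) (hC2 : ∀ x ∈ C2, ¬ p x) :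
    A1 = A2 := by
  have h1 : (A1 + B1 + C1).filter p = A1 := by
    rw [Multiset.filter_add, Multiset.filter_add, Multiset.filter_eq_self.2 hA1,
      Multiset.filter_eq_nil.2 hB1, Multiset.filter_eq_nil.2 hC1, add_zero, add_zero]
  have h2 : (A2 + B2 + C2).filter p = A2 := by
    rw [Multiset.filter_add, Multiset.filter_add, Multiset.filter_eq_self.2 hA2,
      Multiset.filter_eq_nil.2 hB2, Multiset.filter_eq_nil.2 hC2, add_zero, add_zero]
  rw [h] at h1
  exact h1.symm.trans h2

private lemma abs_step_sign {a c : ℤ} (h : |a| + |c| = |c - a|) :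
    (0 < c - a → a ≤ 0 ∧ 0 ≤ c) ∧ (c - a < 0 → c ≤ 0 ∧ 0 ≤ a) := by
  rcases abs_cases a with ⟨h1,h1'⟩|⟨h1,h1'⟩ <;> rcases abs_cases c with ⟨h2,h2'⟩|⟨h2,h2'⟩ <;>
    rcases abs_cases (c-a) with ⟨h3,h3'⟩|⟨h3,h3'⟩ <;> constructor <;> intro hd <;> omega

private lemma cons3_add {α : Type*} (a b c : α) (A B C : Multiset α) :
    a ::ₘ b ::ₘ c ::ₘ (A + B + C) = (a ::ₘ A) + (b ::ₘ B) + (c ::ₘ C) := by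
  simp only [← Multiset.singleton_add]
  abel

private lemma map_range_triple {α : Type*} (f : ℕ → α) (k : ℕ) :
    Multiset.map f (Multiset.range (3*k)) =
      Multiset.map (fun m => f (3*m)) (Multiset.range k) +
      Multiset.map (fun m => f (3*m+1)) (Multiset.range k) +
      Multiset.map (fun m => f (3*m+2)) (Multiset.range k) := by
  induction k with
  | zero => simp
  | succ k ih =>
      rw [show 3*(k+1) = (3*k+1+1)+1 by ring, Multiset.range_succ, Multiset.range_succ,
        Multiset.range_succ, Multiset.range_succ, Multiset.map_cons, Multiset.map_cons,
        Multiset.map_cons, Multiset.map_cons, Multiset.map_cons, Multiset.map_cons, ih]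
      rw [show 3*k+1+1 = 3*k+2 by ring]
      simp only [← Multiset.singleton_add]
      abel

private lemma sum_map_triple {α : Type*} (s : Multiset α) (g1 g2 g3 : α → ℤ) :
    (s.map (fun m => ({g1 m} : Multiset ℤ) + {g2 m} + {g3 m})).sum =
      s.map g1 + s.map g2 + s.map g3 := by
  induction s using Multiset.induction_on with
  | empty => simp
  | cons a s ih =>
      rw [Multiset.map_cons, Multiset.sum_cons, ih, Multiset.map_cons, Multiset.map_cons,
        Multiset.map_cons]
      simp only [← Multiset.singleton_add]
      abel

private lemma bwd_aux (k : ℕ) (b : ℤ) (X Y Z : Multiset ℤ) (π : ℕ → ℤ)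
    (hY : Multiset.card Y = k) (hZ : Multiset.card Z = k)
    (hXb : ∀ x ∈ X, 0 < x ∧ x < b) (hYb : ∀ y ∈ Y, 0 < y ∧ y < b)
    (hZb : ∀ z ∈ Z, 0 < z ∧ z < b) (hb0 : 0 < b)
    (hbsum : (k : ℤ) * b = (X + Y + Z).sum)
    (hmap : Multiset.map π (Multiset.range (3 * k)) =
      X + Y.map (fun y => y + 2 * b) + Z.map (fun z => z - 3 * b))
    (hsum2 : 2 * ∑ i ∈ Finset.range (3 * k), |∑ j ∈ Finset.range (i + 1), π j| =
      ((X + Y.map (fun y => y + 2 * b) + Z.map (fun z => z - 3 * b)).map (fun x => |x|)).sum) :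
    ∃ M : Multiset (ℤ × ℤ × ℤ),
      M.map Prod.fst = X ∧ M.map (fun t => t.2.1) = Y ∧ M.map (fun t => t.2.2) = Z ∧
      ∀ t ∈ M, t.1 + t.2.1 + t.2.2 = b := by
  classical
  -- membership bounds on the combined multiset
  have hY' : ∀ s ∈ Y.map (fun y => y + 2 * b), 2*b < s ∧ s < 3*b := by
    intro s hs
    obtain ⟨y, hy, rfl⟩ := Multiset.mem_map.1 hs
    have := hYb y hy
    constructor <;> linarith [this.1, this.2]
  have hZ' : ∀ s ∈ Z.map (fun z => z - 3 * b), -(3*b) < s ∧ s < -(2*b) := by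
    intro s hs
    obtain ⟨z, hz, rfl⟩ := Multiset.mem_map.1 hs
    have := hZb z hz
    constructor <;> linarith [this.1, this.2]
  -- classification of π values
  have hclass : ∀ i, i < 3*k →
      (0 < π i ∧ π i < b) ∨ (2*b < π i ∧ π i < 3*b) ∨ (-(3*b) < π i ∧ π i < -(2*b)) := by
    intro i hi
    have hmem : π i ∈ X + Y.map (fun y => y + 2 * b) + Z.map (fun z => z - 3 * b) := by
      rw [← hmap]
      exact Multiset.mem_map_of_mem _ (Multiset.mem_range.2 hi)
    rcases Multiset.mem_add.1 hmem with hmem | hmem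
    · rcases Multiset.mem_add.1 hmem with hmem | hmem
      · exact Or.inl (hXb _ hmem)
      · exact Or.inr (Or.inl (hY' _ hmem))
    · exact Or.inr (Or.inr (hZ' _ hmem))
  have hne : ∀ i, i < 3*k → π i ≠ 0 := by
    intro i hi
    rcases hclass i hi with h | h | h <;> omega
  -- total sum is zero
  have hPn : Pre π (3*k) = 0 := by
    have h1 : Pre π (3*k) = (Multiset.map π (Multiset.range (3*k))).sum := rfl
    rw [h1, hmap]
    simp only [Multiset.sum_add, sub_eq_add_neg, Multiset.sum_map_add]
    simp only [Multiset.map_id', Multiset.map_const', Multiset.sum_replicate, hY, hZ,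
      nsmul_eq_mul]
    rw [Multiset.sum_add, Multiset.sum_add] at hbsum
    linarith [hbsum]
  -- per-step equality of absolute values
  have habs : ((X + Y.map (fun y => y + 2 * b) + Z.map (fun z => z - 3 * b)).map
      (fun x => |x|)).sum = ∑ i ∈ Finset.range (3*k), |π i| := by
    rw [← hmap, Multiset.map_map]
    rfl
  rw [habs] at hsum2
  have hstep : ∀ i, i < 3*k → |Pre π i| + |Pre π (i+1)| = |π i| := by
    have hnonneg : ∀ i ∈ Finset.range (3*k), 0 ≤ |Pre π i| + |Pre π (i+1)| - |π i| := by
      intro i _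
      have hd : π i = Pre π (i+1) - Pre π i := by rw [Pre_succ]; ring
      rw [hd]
      rcases abs_cases (Pre π i) with ⟨h1,h1'⟩|⟨h1,h1'⟩ <;>
        rcases abs_cases (Pre π (i+1)) with ⟨h2,h2'⟩|⟨h2,h2'⟩ <;>
        rcases abs_cases (Pre π (i+1) - Pre π i) with ⟨h3,h3'⟩|⟨h3,h3'⟩ <;> omega
    have hshift : ∑ i ∈ Finset.range (3*k), |Pre π i|
        = ∑ i ∈ Finset.range (3*k), |Pre π (i+1)| := by
      have h1 := Finset.sum_range_succ (fun i => |Pre π i|) (3*k)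
      have h2 := Finset.sum_range_succ' (fun i => |Pre π i|) (3*k)
      have hP0 : Pre π 0 = 0 := rfl
      simp only [hP0, abs_zero, add_zero] at h2
      rw [h1, hPn, abs_zero, add_zero] at h2
      simpa using h2
    have htot : ∑ i ∈ Finset.range (3*k), (|Pre π i| + |Pre π (i+1)| - |π i|) = 0 := by
      rw [Finset.sum_sub_distrib, Finset.sum_add_distrib, hshift]
      have heq : ∀ i ∈ Finset.range (3*k), |Pre π (i+1)| = |∑ j ∈ Finset.range (i + 1), π j| :=
        fun i _ => rfl
      rw [Finset.sum_congr rfl heq]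
      omega
    have hz := (Finset.sum_eq_zero_iff_of_nonneg hnonneg).1 htot
    intro i hi
    have := hz i (Finset.mem_range.2 hi)
    omega
  have hup : ∀ i, i < 3*k → 0 < π i → Pre π i ≤ 0 ∧ 0 ≤ Pre π (i+1) := by
    intro i hi hpos
    have hst := hstep i hi
    have hd : Pre π (i+1) - Pre π i = π i := by rw [Pre_succ]; ring
    rw [← hd] at hst
    exact (abs_step_sign hst).1 (by rw [hd]; exact hpos)
  -- number of negative entries is k
  have hd0 : dcnt π (3*k) 0 = k := by
    have hXp : ∀ x ∈ X, ¬ (x < 0) := fun x hx => by have := hXb x hx; omega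
    have hYp : ∀ s ∈ Y.map (fun y => y + 2 * b), ¬ (s < 0) := fun s hs => by
      have := hY' s hs; omega
    have hZn : ∀ s ∈ Z.map (fun z => z - 3 * b), s < 0 := fun s hs => by
      have := hZ' s hs; omega
    have hcnt : Multiset.filter (fun s : ℤ => s < 0)
        (X + Y.map (fun y => y + 2 * b) + Z.map (fun z => z - 3 * b)) =
        Z.map (fun z => z - 3 * b) := by
      rw [Multiset.filter_add, Multiset.filter_add, Multiset.filter_eq_nil.2 hXp,
        Multiset.filter_eq_nil.2 hYp, Multiset.filter_eq_self.2 hZn]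
      simp
    have h2 : Multiset.filter (fun s : ℤ => s < 0) (Multiset.map π (Multiset.range (3*k))) =
        Multiset.map π (Multiset.filter (fun i => π i < 0) (Multiset.range (3*k))) := by
      simpa [Function.comp] using
        Multiset.filter_map (p := fun s : ℤ => s < 0) π (Multiset.range (3*k))
    rw [hmap, hcnt] at h2
    have h3 : Multiset.card (Z.map (fun z => z - 3 * b)) =
        Multiset.card (Multiset.map π (Multiset.filter (fun i => π i < 0)
          (Multiset.range (3*k)))) := by rw [h2]
    simp only [Multiset.card_map] at h3
    have h4 : dcnt π (3*k) 0 =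
        Multiset.card (Multiset.filter (fun i => π i < 0) (Multiset.range (3*k))) := by
      rw [dcnt, ← Finset.range_eq_Ico]
      rfl
    omega
  -- the inductive structure
  have St : ∀ m, m ≤ k → Pre π (3*m) = 0 ∧ 3*k - 3*m = 3 * dcnt π (3*k) (3*m) := by
    intro m
    induction m with
    | zero =>
        intro _
        refine ⟨rfl, ?_⟩
        rw [Nat.mul_zero, Nat.sub_zero, hd0]
    | succ m ih =>
        intro hm
        obtain ⟨h1, h2⟩ := ih (by omega)
        obtain ⟨_, _, _, _, _, hP3, hd3⟩ :=
          refined π (3*k) hne hup hPn (3*m) (by omega) h1 h2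
        constructor
        · rw [show 3*(m+1) = 3*m+3 by ring]; exact hP3
        · rw [show 3*(m+1) = 3*m+3 by ring]; exact hd3
  have hblk : ∀ m, m < k → 0 < π (3*m) ∧ π (3*m+1) < 0 ∧ 0 < π (3*m+2) ∧
      π (3*m) + π (3*m+1) + π (3*m+2) = 0 := by
    intro m hm
    obtain ⟨h1, h2⟩ := St m (le_of_lt hm)
    obtain ⟨a1, a2, a3, a4, _, _, _⟩ := refined π (3*k) hne hup hPn (3*m) (by omega) h1 h2
    exact ⟨a1, a2, a3, a4⟩
  -- the triples
  set T : ℕ → ℤ × ℤ × ℤ := fun m =>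
    if π (3*m) < b then (π (3*m), π (3*m+2) - 2*b, π (3*m+1) + 3*b)
    else (π (3*m+2), π (3*m) - 2*b, π (3*m+1) + 3*b) with hTdef
  have hT : ∀ m, m < k → (0 < (T m).1 ∧ (T m).1 < b) ∧ (0 < (T m).2.1 ∧ (T m).2.1 < b) ∧
      (0 < (T m).2.2 ∧ (T m).2.2 < b) ∧ (T m).1 + (T m).2.1 + (T m).2.2 = b ∧
      ({π (3*m)} + {π (3*m+1)} + {π (3*m+2)} : Multiset ℤ) =
        {(T m).1} + {(T m).2.1 + 2*b} + {(T m).2.2 - 3*b} := by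
    intro m hm
    obtain ⟨hb1, hb2, hb3, hbs⟩ := hblk m hm
    have hc1 := hclass (3*m) (by omega)
    have hc2 := hclass (3*m+1) (by omega)
    have hc3 := hclass (3*m+2) (by omega)
    have hZ2 : -(3*b) < π (3*m+1) ∧ π (3*m+1) < -(2*b) := by
      rcases hc2 with h|h|h
      · omega
      · omega
      · exact h
    by_cases hcase : π (3*m) < b
    · have hX1 : 0 < π (3*m) ∧ π (3*m) < b := ⟨hb1, hcase⟩
      have hY3 : 2*b < π (3*m+2) ∧ π (3*m+2) < 3*b := by
        rcases hc3 with h|h|h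
        · omega
        · exact h
        · omega
      have e1 : (T m) = (π (3*m), π (3*m+2) - 2*b, π (3*m+1) + 3*b) := by
        rw [hTdef]; exact if_pos hcase
      rw [e1]
      dsimp only
      refine ⟨⟨hb1, hcase⟩, ⟨by omega, by omega⟩, ⟨by omega, by omega⟩, by omega, ?_⟩
      rw [show π (3*m+2) - 2*b + 2*b = π (3*m+2) by ring,
        show π (3*m+1) + 3*b - 3*b = π (3*m+1) by ring]
      abel
    · have hY1 : 2*b < π (3*m) ∧ π (3*m) < 3*b := by
        rcases hc1 with h|h|h
        · omega
        · exact h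
        · omega
      have hX3 : 0 < π (3*m+2) ∧ π (3*m+2) < b := by
        rcases hc3 with h|h|h
        · exact h
        · omega
        · omega
      have e1 : (T m) = (π (3*m+2), π (3*m) - 2*b, π (3*m+1) + 3*b) := by
        rw [hTdef]; exact if_neg hcase
      rw [e1]
      dsimp only
      refine ⟨hX3, ⟨by omega, by omega⟩, ⟨by omega, by omega⟩, by omega, ?_⟩
      rw [show π (3*m) - 2*b + 2*b = π (3*m) by ring,
        show π (3*m+1) + 3*b - 3*b = π (3*m+1) by ring]
      abel
  -- the multiset identity
  have hSid : X + Y.map (fun y => y + 2 * b) + Z.map (fun z => z - 3 * b) =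
      Multiset.map (fun m => (T m).1) (Multiset.range k) +
      Multiset.map (fun m => (T m).2.1 + 2*b) (Multiset.range k) +
      Multiset.map (fun m => (T m).2.2 - 3*b) (Multiset.range k) := by
    rw [← hmap]
    calc Multiset.map π (Multiset.range (3*k))
        = ((Multiset.range k).map
            (fun m => ({π (3*m)} : Multiset ℤ) + {π (3*m+1)} + {π (3*m+2)})).sum := by
          rw [sum_map_triple]
          exact map_range_triple π k
      _ = ((Multiset.range k).map
            (fun m => ({(T m).1} : Multiset ℤ) + {(T m).2.1 + 2*b} + {(T m).2.2 - 3*b})).sum := by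
          apply congrArg
          exact Multiset.map_congr rfl
            (fun m hm => ((hT m (Multiset.mem_range.1 hm)).2.2.2.2))
      _ = _ := sum_map_triple _ _ _ _
  -- member bounds of the new pieces
  have hTA : ∀ x ∈ Multiset.map (fun m => (T m).1) (Multiset.range k), 0 < x ∧ x < b := by
    intro x hx
    obtain ⟨m, hm, rfl⟩ := Multiset.mem_map.1 hx
    exact (hT m (Multiset.mem_range.1 hm)).1
  have hTB : ∀ x ∈ Multiset.map (fun m => (T m).2.1 + 2*b) (Multiset.range k),
      2*b < x ∧ x < 3*b := by
    intro x hx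
    obtain ⟨m, hm, rfl⟩ := Multiset.mem_map.1 hx
    have := (hT m (Multiset.mem_range.1 hm)).2.1
    omega
  have hTC : ∀ x ∈ Multiset.map (fun m => (T m).2.2 - 3*b) (Multiset.range k),
      -(3*b) < x ∧ x < -(2*b) := by
    intro x hx
    obtain ⟨m, hm, rfl⟩ := Multiset.mem_map.1 hx
    have := (hT m (Multiset.mem_range.1 hm)).2.2.1
    omega
  -- extract component equalities
  have hXA : X = Multiset.map (fun m => (T m).1) (Multiset.range k) := by
    refine filter_three (fun s => 0 < s ∧ s < b) _ _ _ _ _ _ hSid hXb ?_ ?_ hTA ?_ ?_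
    · intro x hx; have := hY' x hx; omega
    · intro x hx; have := hZ' x hx; omega
    · intro x hx; have := hTB x hx; omega
    · intro x hx; have := hTC x hx; omega
  have hYB : Y.map (fun y => y + 2 * b) =
      Multiset.map (fun m => (T m).2.1 + 2*b) (Multiset.range k) := by
    have hre : Y.map (fun y => y + 2 * b) + X + Z.map (fun z => z - 3 * b) =
        Multiset.map (fun m => (T m).2.1 + 2*b) (Multiset.range k) +
        Multiset.map (fun m => (T m).1) (Multiset.range k) +
        Multiset.map (fun m => (T m).2.2 - 3*b) (Multiset.range k) := by
      calc Y.map (fun y => y + 2 * b) + X + Z.map (fun z => z - 3 * b)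
          = X + Y.map (fun y => y + 2 * b) + Z.map (fun z => z - 3 * b) := by abel
        _ = _ := by rw [hSid]; abel
    refine filter_three (fun s => 2*b < s) _ _ _ _ _ _ hre ?_ ?_ ?_ ?_ ?_ ?_
    · intro x hx; have := hY' x hx; omega
    · intro x hx; have := hXb x hx; omega
    · intro x hx; have := hZ' x hx; omega
    · intro x hx; have := hTB x hx; omega
    · intro x hx; have := hTA x hx; omega
    · intro x hx; have := hTC x hx; omega
  have hZC : Z.map (fun z => z - 3 * b) =
      Multiset.map (fun m => (T m).2.2 - 3*b) (Multiset.range k) := by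
    have hre : Z.map (fun z => z - 3 * b) + X + Y.map (fun y => y + 2 * b) =
        Multiset.map (fun m => (T m).2.2 - 3*b) (Multiset.range k) +
        Multiset.map (fun m => (T m).1) (Multiset.range k) +
        Multiset.map (fun m => (T m).2.1 + 2*b) (Multiset.range k) := by
      calc Z.map (fun z => z - 3 * b) + X + Y.map (fun y => y + 2 * b)
          = X + Y.map (fun y => y + 2 * b) + Z.map (fun z => z - 3 * b) := by abel
        _ = _ := by rw [hSid]; abel
    refine filter_three (fun s => s < 0) _ _ _ _ _ _ hre ?_ ?_ ?_ ?_ ?_ ?_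
    · intro x hx; have := hZ' x hx; omega
    · intro x hx; have := hXb x hx; omega
    · intro x hx; have := hY' x hx; omega
    · intro x hx; have := hTC x hx; omega
    · intro x hx; have := hTA x hx; omega
    · intro x hx; have := hTB x hx; omega
  -- cancel the injections
  have hYeq : Y = Multiset.map (fun m => (T m).2.1) (Multiset.range k) := by
    have hinj : Function.Injective (fun s : ℤ => s + 2*b) := fun a1 a2 h => by
      dsimp at h; omega
    apply Multiset.map_injective hinj
    rw [show Multiset.map (fun s => s + 2*b) Y = Y.map (fun y => y + 2 * b) from rfl, hYB,
      Multiset.map_map]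
    rfl
  have hZeq : Z = Multiset.map (fun m => (T m).2.2) (Multiset.range k) := by
    have hinj : Function.Injective (fun s : ℤ => s - 3*b) := fun a1 a2 h => by
      dsimp at h; omega
    apply Multiset.map_injective hinj
    rw [show Multiset.map (fun s => s - 3*b) Z = Z.map (fun z => z - 3 * b) from rfl, hZC,
      Multiset.map_map]
    rfl
  refine ⟨Multiset.map T (Multiset.range k), ?_, ?_, ?_, ?_⟩
  · rw [Multiset.map_map, hXA]; rfl
  · rw [Multiset.map_map, hYeq]; rfl
  · rw [Multiset.map_map, hZeq]; rfl
  · intro t ht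
    obtain ⟨m, hm, rfl⟩ := Multiset.mem_map.1 ht
    exact (hT m (Multiset.mem_range.1 hm)).2.2.2.1

private lemma fwd_aux (b : ℤ) (hb : 0 < b) (M : Multiset (ℤ × ℤ × ℤ))
    (hM : ∀ t ∈ M, 0 < t.1 ∧ 0 < t.2.1 ∧ t.2.2 < b ∧ t.1 + t.2.1 + t.2.2 = b) :
    ∃ π : ℕ → ℤ,
      Multiset.map π (Multiset.range (3 * Multiset.card M)) =
        M.map Prod.fst + (M.map fun t => t.2.1).map (fun y => y + 2*b) +
          (M.map fun t => t.2.2).map (fun z => z - 3*b) ∧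
      (∑ j ∈ Finset.range (3 * Multiset.card M), π j = 0) ∧
      2 * ∑ i ∈ Finset.range (3 * Multiset.card M), |∑ j ∈ Finset.range (i + 1), π j| =
        ((M.map Prod.fst + (M.map fun t => t.2.1).map (fun y => y + 2*b) +
          (M.map fun t => t.2.2).map (fun z => z - 3*b)).map (fun x => |x|)).sum := by
  induction M using Multiset.induction_on with
  | empty => exact ⟨fun _ => 0, by simp⟩
  | cons t M ih =>
      obtain ⟨π, hmap, hzero, hsum⟩ := ih (fun s hs => hM s (Multiset.mem_cons_of_mem hs))
      obtain ⟨hx, hy, hz, hsb⟩ := hM t (Multiset.mem_cons_self t M)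
      set c := Multiset.card M with hc
      set π' : ℕ → ℤ := fun i => if i < 3*c then π i else if i = 3*c then t.2.1 + 2*b
        else if i = 3*c+1 then t.2.2 - 3*b else t.1 with hπ'
      have hag : ∀ i, i < 3*c → π' i = π i := fun i hi => if_pos hi
      have hv0 : π' (3*c) = t.2.1 + 2*b := by simp [hπ']
      have hv1 : π' (3*c+1) = t.2.2 - 3*b := by simp [hπ']
      have hv2 : π' (3*c+1+1) = t.1 := by
        simp only [hπ']
        rw [if_neg (by omega : ¬(3*c+1+1 < 3*c)), if_neg (by omega : ¬(3*c+1+1 = 3*c)),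
          if_neg (by omega : ¬(3*c+1+1 = 3*c+1))]
      have hPag : ∀ i, i ≤ 3*c → ∑ j ∈ Finset.range i, π' j = ∑ j ∈ Finset.range i, π j :=
        fun i hi => Finset.sum_congr rfl fun j hj => hag j (by
          have := Finset.mem_range.1 hj; omega)
      have hcard : 3 * Multiset.card (t ::ₘ M) = 3*c + 1 + 1 + 1 := by
        rw [Multiset.card_cons]; ring
      have hP1 : ∑ j ∈ Finset.range (3*c+1), π' j = t.2.1 + 2*b := by
        rw [Finset.sum_range_succ, hPag _ le_rfl, hzero, hv0, zero_add]
      have hP2 : ∑ j ∈ Finset.range (3*c+1+1), π' j = -t.1 := by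
        rw [Finset.sum_range_succ, hP1, hv1]; linarith
      have hP3 : ∑ j ∈ Finset.range (3*c+1+1+1), π' j = 0 := by
        rw [Finset.sum_range_succ, hP2, hv2]; linarith
      have hmm : Multiset.map π' (Multiset.range (3*c)) = Multiset.map π (Multiset.range (3*c)) :=
        Multiset.map_congr rfl (fun i hi => hag i (Multiset.mem_range.1 hi))
      refine ⟨π', ?_, ?_, ?_⟩
      · rw [hcard, Multiset.range_succ, Multiset.range_succ, Multiset.range_succ,
          Multiset.map_cons, Multiset.map_cons, Multiset.map_cons, hv2, hv1, hv0, hmm, hmap]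
        simp only [Multiset.map_cons]
        rw [Multiset.cons_swap (t.2.2 - 3*b) (t.2.1 + 2*b), cons3_add]
      · rw [hcard]; exact hP3
      · rw [hcard, Finset.sum_range_succ, Finset.sum_range_succ, Finset.sum_range_succ]
        have hfirst : ∑ i ∈ Finset.range (3*c), |∑ j ∈ Finset.range (i+1), π' j| =
            ∑ i ∈ Finset.range (3*c), |∑ j ∈ Finset.range (i+1), π j| :=
          Finset.sum_congr rfl fun i hi => by
            rw [hPag (i+1) (by have := Finset.mem_range.1 hi; omega)]
        rw [hfirst, hP1, hP2, hP3]
        simp only [Multiset.map_cons, Multiset.map_add, Multiset.sum_cons, Multiset.sum_add]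
          at hsum ⊢
        rw [abs_neg, abs_of_pos hx, abs_of_pos (by linarith : (0:ℤ) < t.2.1 + 2*b),
          abs_of_neg (by linarith : t.2.2 - 3*b < 0), abs_zero]
        linarith




/-- Correctness of the reduction from Numerical 3-Dimensional Matching to
Min-∑|Prefixsum|: with `S = X ∪ {y+2b : y ∈ Y} ∪ {z-3b : z ∈ Z}`, a perfect
numerical matching exists iff some permutation `π` of `S` achieves the lower bound
`∑ |P_i| = (∑_{s∈S} |s|)/2` (stated doubled to stay in `ℤ`). -/
theorem stmt_7 (k : ℕ) (b : ℤ) (X Y Z : Multiset ℤ)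
    (hX : Multiset.card X = k) (hY : Multiset.card Y = k) (hZ : Multiset.card Z = k)
    (hpos : ∀ e ∈ X + Y + Z, 0 < e) (hlt : ∀ e ∈ X + Y + Z, e < b)
    (hb : (k : ℤ) * b = (X + Y + Z).sum) :
    (∃ M : Multiset (ℤ × ℤ × ℤ),
        M.map Prod.fst = X ∧
        M.map (fun t => t.2.1) = Y ∧
        M.map (fun t => t.2.2) = Z ∧
        ∀ t ∈ M, t.1 + t.2.1 + t.2.2 = b) ↔
      (∃ π : ℕ → ℤ,
        Multiset.map π (Multiset.range (3 * k)) =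
          X + Y.map (fun y => y + 2 * b) + Z.map (fun z => z - 3 * b) ∧
        2 * ∑ i ∈ Finset.range (3 * k), |∑ j ∈ Finset.range (i + 1), π j| =
          ((X + Y.map (fun y => y + 2 * b) + Z.map (fun z => z - 3 * b)).map
            (fun x => |x|)).sum) := by
  rcases Nat.eq_zero_or_pos k with rfl | hk
  · have hX0 : X = 0 := Multiset.card_eq_zero.1 hX
    have hY0 : Y = 0 := Multiset.card_eq_zero.1 hY
    have hZ0 : Z = 0 := Multiset.card_eq_zero.1 hZ
    subst hX0 hY0 hZ0
    constructor
    · intro _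
      exact ⟨fun _ => 0, by simp, by simp⟩
    · intro _
      exact ⟨0, by simp, by simp, by simp, by simp⟩
  · have hXne : X ≠ 0 := by
      intro h
      rw [h] at hX
      simp at hX
      omega
    obtain ⟨x0, hx0⟩ := Multiset.exists_mem_of_ne_zero hXne
    have hx0m : x0 ∈ X + Y + Z :=
      Multiset.mem_add.2 (Or.inl (Multiset.mem_add.2 (Or.inl hx0)))
    have hb0 : 0 < b := lt_trans (hpos x0 hx0m) (hlt x0 hx0m)
    constructor
    · rintro ⟨M, hMX, hMY, hMZ, hMb⟩
      have hcM : Multiset.card M = k := by rw [← hX, ← hMX, Multiset.card_map]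
      have hM : ∀ t ∈ M, 0 < t.1 ∧ 0 < t.2.1 ∧ t.2.2 < b ∧ t.1 + t.2.1 + t.2.2 = b := by
        intro t ht
        have h1 : t.1 ∈ X := hMX ▸ Multiset.mem_map_of_mem Prod.fst ht
        have h2 : t.2.1 ∈ Y := hMY ▸ Multiset.mem_map_of_mem _ ht
        have h3 : t.2.2 ∈ Z := hMZ ▸ Multiset.mem_map_of_mem _ ht
        refine ⟨hpos _ ?_, hpos _ ?_, hlt _ ?_, hMb t ht⟩
        · exact Multiset.mem_add.2 (Or.inl (Multiset.mem_add.2 (Or.inl h1)))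
        · exact Multiset.mem_add.2 (Or.inl (Multiset.mem_add.2 (Or.inr h2)))
        · exact Multiset.mem_add.2 (Or.inr h3)
      obtain ⟨π, h1, _, h3⟩ := fwd_aux b hb0 M hM
      rw [hcM] at h1 h3
      rw [← hMX, ← hMY, ← hMZ]
      exact ⟨π, h1, h3⟩
    · rintro ⟨π, hmap, hsum⟩
      refine bwd_aux k b X Y Z π hY hZ ?_ ?_ ?_ hb0 hb hmap hsum
      · intro x hx
        have hm : x ∈ X + Y + Z := Multiset.mem_add.2 (Or.inl (Multiset.mem_add.2 (Or.inl hx)))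
        exact ⟨hpos x hm, hlt x hm⟩
      · intro y hy
        have hm : y ∈ X + Y + Z := Multiset.mem_add.2 (Or.inl (Multiset.mem_add.2 (Or.inr hy)))
        exact ⟨hpos y hm, hlt y hm⟩
      · intro z hz
        have hm : z ∈ X + Y + Z := Multiset.mem_add.2 (Or.inr hz)
        exact ⟨hpos z hm, hlt z hm⟩
end

section
/- If a multiset M ⊆ X×Y×Z is a perfect numerical 3-dimensional matching (each element used exactly once and x+y+z = b for each triple), then the permutation π of S = X' ∪ Y' ∪ Z' (with X' = X, Y' = {y+2b}, Z' = {z−3b}) that arranges each triple i as (x, z−3b, y+2b) satisfies P_j^π = 0 iff j ≡ 0 mod 3, P_j^π > 0 iff j ≡ 1 mod 3, P_j^π < 0 iff j ≡ 2 mod 3, and achieves ∑_j |P_j^π| = (∑_{s∈S}|s|)/2. -/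
/-!
Each block `(x, z - 3b, y + 2b)` sums to `x + y + z - b = 0`, so inside a block the prefix sums
are `x > 0`, then `x + z - 3b = -(2b + y) < 0`, then `0`. Hence `∑ |P_j| = ∑ᵢ (3b - zᵢ)`, while
`|x| + |y + 2b| + |z - 3b| = 2 (3b - z)` for every triple, which gives the factor `2`.
-/

open Finset

theorem sum_range_three_mul {M : Type*} [AddCommMonoid M] (f : ℕ → M) (k : ℕ) :
    ∑ j ∈ range (3 * k), f j = ∑ i ∈ range k, (f (3 * i) + f (3 * i + 1) + f (3 * i + 2)) := by
  induction k with
  | zero => simp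
  | succ k ih =>
    rw [show 3 * (k + 1) = 3 * k + 2 + 1 by ring, sum_range_succ, sum_range_succ, sum_range_succ,
      ih, sum_range_succ, add_assoc, add_assoc, add_assoc]

section BlockPrefixSums

variable {π : ℕ → ℤ} {k : ℕ}

theorem sum_range_three_mul_eq_zero
    (hblock : ∀ i < k, π (3 * i) + π (3 * i + 1) + π (3 * i + 2) = 0) :
    ∀ i ≤ k, ∑ t ∈ range (3 * i), π t = 0
  | 0, _ => by simp
  | i + 1, hi => by
    rw [show 3 * (i + 1) = 3 * i + 2 + 1 by ring, sum_range_succ, sum_range_succ,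
      sum_range_succ, sum_range_three_mul_eq_zero hblock i (by omega), zero_add,
      hblock i (by omega)]

theorem sum_range_three_mul_add_one
    (hblock : ∀ i < k, π (3 * i) + π (3 * i + 1) + π (3 * i + 2) = 0) {i : ℕ} (hi : i < k) :
    ∑ t ∈ range (3 * i + 1), π t = π (3 * i) := by
  rw [sum_range_succ, sum_range_three_mul_eq_zero hblock i hi.le, zero_add]

theorem sum_range_three_mul_add_two
    (hblock : ∀ i < k, π (3 * i) + π (3 * i + 1) + π (3 * i + 2) = 0) {i : ℕ} (hi : i < k) :
    ∑ t ∈ range (3 * i + 2), π t = π (3 * i) + π (3 * i + 1) := by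
  rw [sum_range_succ, sum_range_three_mul_add_one hblock hi]

theorem sum_range_sign_iff_mod_three
    (hblock : ∀ i < k, π (3 * i) + π (3 * i + 1) + π (3 * i + 2) = 0)
    (hfirst : ∀ i < k, 0 < π (3 * i)) (hsecond : ∀ i < k, π (3 * i) + π (3 * i + 1) < 0)
    {j : ℕ} (hj : j ≤ 3 * k) :
    (∑ t ∈ range j, π t = 0 ↔ j % 3 = 0) ∧ (0 < ∑ t ∈ range j, π t ↔ j % 3 = 1) ∧
      (∑ t ∈ range j, π t < 0 ↔ j % 3 = 2) := by
  obtain ⟨i, r, hr, rfl⟩ : ∃ i r, r < 3 ∧ j = 3 * i + r := ⟨j / 3, j % 3, by omega, by omega⟩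
  have hmod : (3 * i + r) % 3 = r := by omega
  rw [hmod]
  interval_cases r
  · rw [add_zero, sum_range_three_mul_eq_zero hblock i (by omega)]
    simp
  · rw [sum_range_three_mul_add_one hblock (by omega)]
    have := hfirst i (by omega)
    omega
  · rw [sum_range_three_mul_add_two hblock (by omega)]
    have := hsecond i (by omega)
    omega

theorem sum_abs_sum_range_succ_eq
    (hblock : ∀ i < k, π (3 * i) + π (3 * i + 1) + π (3 * i + 2) = 0)
    (hfirst : ∀ i < k, 0 < π (3 * i)) (hsecond : ∀ i < k, π (3 * i) + π (3 * i + 1) < 0) :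
    ∑ j ∈ range (3 * k), |∑ t ∈ range (j + 1), π t| = ∑ i ∈ range k, -π (3 * i + 1) := by
  rw [sum_range_three_mul]
  refine sum_congr rfl fun i hi => ?_
  have hi : i < k := mem_range.mp hi
  rw [sum_range_three_mul_add_one hblock hi, sum_range_three_mul_add_two hblock hi,
    show 3 * i + 2 + 1 = 3 * (i + 1) by ring, sum_range_three_mul_eq_zero hblock (i + 1) hi,
    abs_of_pos (hfirst i hi), abs_of_neg (hsecond i hi), abs_zero]
  ring

end BlockPrefixSums

theorem List.sum_range_length_getD {α β : Type*} [AddCommMonoid β] (l : List α) (f : α → β)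
    (d : α) : ∑ i ∈ Finset.range l.length, f (l.getD i d) = (l.map f).sum := by
  rw [Finset.sum_range, ← Fin.sum_univ_fun_getElem]
  exact Finset.sum_congr rfl fun i _ => by
    rw [List.getD_eq_getElem?_getD, List.getElem?_eq_getElem i.2, Option.getD_some]

theorem sum_abs_shifted_triples (M : List (ℤ × ℤ × ℤ)) (b : ℤ)
    (htriple : ∀ t ∈ M, t.1 + t.2.1 + t.2.2 = b)
    (hnonneg : ∀ t ∈ M, 0 ≤ t.1 ∧ 0 ≤ t.2.1 ∧ 0 ≤ t.2.2) :
    ((↑(M.map Prod.fst) + (↑(M.map fun t => t.2.1) : Multiset ℤ).map (fun y => y + 2 * b) +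
        (↑(M.map fun t => t.2.2) : Multiset ℤ).map (fun z => z - 3 * b)).map (fun x => |x|)).sum =
      2 * (M.map fun t => 3 * b - t.2.2).sum := by
  calc _ = (M.map fun t => |t.1| + |t.2.1 + 2 * b| + |t.2.2 - 3 * b|).sum := by
        simp only [Multiset.map_coe, Multiset.coe_add, Multiset.sum_coe, List.map_map,
          List.map_append, List.sum_append, List.sum_map_add, Function.comp_def]
    _ = (M.map fun t => 2 * (3 * b - t.2.2)).sum := by
        congr 1
        refine List.map_congr_left fun t ht => ?_
        obtain ⟨hx, hy, hz⟩ := hnonneg t ht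
        have := htriple t ht
        rw [abs_of_nonneg hx, abs_of_nonneg (by linarith), abs_of_nonpos (by linarith)]
        linarith
    _ = _ := List.sum_map_mul_left ..

theorem stmt_8_general (k : ℕ) (b : ℤ) (X Y Z : Multiset ℤ)
    (hpos : ∀ e ∈ X + Y + Z, 0 < e)
    (M : List (ℤ × ℤ × ℤ)) (hlen : M.length = k)
    (hMx : (↑(M.map Prod.fst) : Multiset ℤ) = X)
    (hMy : (↑(M.map (fun t => t.2.1)) : Multiset ℤ) = Y)
    (hMz : (↑(M.map (fun t => t.2.2)) : Multiset ℤ) = Z)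
    (htriple : ∀ t ∈ M, t.1 + t.2.1 + t.2.2 = b)
    (π : ℕ → ℤ)
    (hπ : ∀ i < k,
      π (3 * i) = (M.getD i default).1 ∧
      π (3 * i + 1) = (M.getD i default).2.2 - 3 * b ∧
      π (3 * i + 2) = (M.getD i default).2.1 + 2 * b) :
    (∀ j ≤ 3 * k,
      ((∑ t ∈ Finset.range j, π t = 0 ↔ j % 3 = 0) ∧
        (0 < ∑ t ∈ Finset.range j, π t ↔ j % 3 = 1) ∧
        (∑ t ∈ Finset.range j, π t < 0 ↔ j % 3 = 2))) ∧
    2 * ∑ i ∈ Finset.range (3 * k), |∑ j ∈ Finset.range (i + 1), π j| =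
      ((X + Y.map (fun y => y + 2 * b) + Z.map (fun z => z - 3 * b)).map
        (fun x => |x|)).sum := by
  subst hMx hMy hMz
  have hcomp : ∀ t ∈ M, 0 < t.1 ∧ 0 < t.2.1 ∧ 0 < t.2.2 := fun t ht => by
    refine ⟨hpos _ ?_, hpos _ ?_, hpos _ ?_⟩ <;>
      simp only [Multiset.mem_add, Multiset.mem_coe, List.mem_map_of_mem ht, true_or, or_true]
  have hmem : ∀ i < k, M.getD i default ∈ M := fun i hi => by
    rw [List.getD_eq_getElem _ _ (by omega)]
    exact List.getElem_mem _
  have hblock : ∀ i < k, π (3 * i) + π (3 * i + 1) + π (3 * i + 2) = 0 := fun i hi => by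
    obtain ⟨h0, h1, h2⟩ := hπ i hi
    have := htriple _ (hmem i hi)
    rw [h0, h1, h2]
    linarith
  have hfirst : ∀ i < k, 0 < π (3 * i) := fun i hi => by
    rw [(hπ i hi).1]
    exact (hcomp _ (hmem i hi)).1
  have hsecond : ∀ i < k, π (3 * i) + π (3 * i + 1) < 0 := fun i hi => by
    obtain ⟨h0, h1, -⟩ := hπ i hi
    obtain ⟨hx, hy, hz⟩ := hcomp _ (hmem i hi)
    have := htriple _ (hmem i hi)
    rw [h0, h1]
    linarith
  refine ⟨fun j hj => sum_range_sign_iff_mod_three hblock hfirst hsecond hj, ?_⟩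
  rw [sum_abs_sum_range_succ_eq hblock hfirst hsecond,
    sum_abs_shifted_triples M b htriple fun t ht =>
      (hcomp t ht).imp le_of_lt (And.imp le_of_lt le_of_lt),
    ← List.sum_range_length_getD M _ default, hlen]
  congr 1
  refine sum_congr rfl fun i hi => ?_
  rw [(hπ i (mem_range.mp hi)).2.1]
  ring

/-- Forward direction of the NP-hardness reduction: if `M` is a perfect
numerical 3-dimensional matching (listed as a list of triples), the permutation that
arranges the `i`-th triple as `(x, z-3b, y+2b)` has prefix sums `P_j = 0` iff
`j ≡ 0 (mod 3)`, `P_j > 0` iff `j ≡ 1 (mod 3)`, `P_j < 0` iff `j ≡ 2 (mod 3)`, and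
achieves `∑_j |P_j| = (∑_{s∈S} |s|)/2` (stated doubled to stay in `ℤ`). -/
theorem stmt_8 (k : ℕ) (b : ℤ) (X Y Z : Multiset ℤ)
    (hpos : ∀ e ∈ X + Y + Z, 0 < e) (hlt : ∀ e ∈ X + Y + Z, e < b)
    (hb : (k : ℤ) * b = (X + Y + Z).sum)
    (M : List (ℤ × ℤ × ℤ)) (hlen : M.length = k)
    (hMx : (↑(M.map Prod.fst) : Multiset ℤ) = X)
    (hMy : (↑(M.map (fun t => t.2.1)) : Multiset ℤ) = Y)
    (hMz : (↑(M.map (fun t => t.2.2)) : Multiset ℤ) = Z)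
    (htriple : ∀ t ∈ M, t.1 + t.2.1 + t.2.2 = b)
    (π : ℕ → ℤ)
    (hπ : ∀ i < k,
      π (3 * i) = (M.getD i default).1 ∧
      π (3 * i + 1) = (M.getD i default).2.2 - 3 * b ∧
      π (3 * i + 2) = (M.getD i default).2.1 + 2 * b) :
    (∀ j ≤ 3 * k,
      ((∑ t ∈ Finset.range j, π t = 0 ↔ j % 3 = 0) ∧
        (0 < ∑ t ∈ Finset.range j, π t ↔ j % 3 = 1) ∧
        (∑ t ∈ Finset.range j, π t < 0 ↔ j % 3 = 2))) ∧
    2 * ∑ i ∈ Finset.range (3 * k), |∑ j ∈ Finset.range (i + 1), π j| =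
      ((X + Y.map (fun y => y + 2 * b) + Z.map (fun z => z - 3 * b)).map
        (fun x => |x|)).sum :=
  stmt_8_general k b X Y Z hpos M hlen hMx hMy hMz htriple π hπ
end

section
/- Let S be a multiset of real numbers with exactly one negative element x and ∑_{s∈S} s = 0. For any permutation π of S with pos_π(x) = k, the objective value decomposes as ∑_{i=1}^n |P_i^π| = ∑_{i=1}^{k−1} π(i)·(k−i) + ∑_{i=1}^{n−k} π(n−i+1)·(n−k−i+1). -/
/-!
Let `m` be the index of the negative entry. Before `m` every partial sum is a sum of nonnegative
terms, and from `m` on, since the total is zero, the partial sum `P_i` is minus the nonnegative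
tail `∑_{j > i} π j`. Hence `∑ |P_i| = ∑_{i < m} P_i + ∑_{i ≥ m} ∑_{j > i} π j`, and exchanging
the order of summation counts how often each `π j` occurs: `m - j` times before the negative
entry and `j - m` times after it.
-/

open Finset

lemma card_filter_range_eq_of_map_range_eq {β : Type*} {f g : ℕ → β} {n : ℕ}
    (h : Multiset.map f (Multiset.range n) = Multiset.map g (Multiset.range n))
    (p : β → Prop) [DecidablePred p] :
    #{i ∈ range n | p (f i)} = #{i ∈ range n | p (g i)} := by
  have hcount := congrArg (Multiset.countP p) h
  rwa [Multiset.countP_map, Multiset.countP_map] at hcount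

lemma Finset.not_of_card_filter_eq_one {ι : Type*} {s : Finset ι} {p : ι → Prop}
    [DecidablePred p] (h : #{i ∈ s | p i} = 1) {m j : ι} (hm : m ∈ s) (hpm : p m)
    (hj : j ∈ s) (hjm : j ≠ m) : ¬ p j := fun hpj =>
  hjm (card_le_one.mp h.le j (mem_filter.mpr ⟨hj, hpj⟩) m (mem_filter.mpr ⟨hm, hpm⟩))

section DoubleSums

variable {M : Type*} [AddCommMonoid M]

lemma sum_range_sum_range_succ (f : ℕ → M) (m : ℕ) :
    ∑ i ∈ range m, ∑ j ∈ range (i + 1), f j = ∑ j ∈ range m, (m - j) • f j := by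
  rw [sum_comm' (t' := range m) (s' := fun j => Ico j m)]
  · simp only [sum_const, Nat.card_Ico]
  · intro i j
    simp only [mem_range, mem_Ico]
    omega

lemma sum_Ico_sum_Ico_succ (f : ℕ → M) (m n : ℕ) :
    ∑ i ∈ Ico m n, ∑ j ∈ Ico (i + 1) n, f j = ∑ j ∈ Ico (m + 1) n, (j - m) • f j := by
  rw [sum_comm' (t' := Ico (m + 1) n) (s' := fun j => Ico m j)]
  · simp only [sum_const, Nat.card_Ico]
  · intro i j
    simp only [mem_Ico]
    omega

lemma sum_Ico_eq_sum_range_reflect (f : ℕ → M) (m n : ℕ) :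
    ∑ j ∈ Ico m n, f j = ∑ i ∈ range (n - m), f (n - (i + 1)) := by
  rw [sum_Ico_eq_sum_range, ← sum_range_reflect]
  refine sum_congr rfl fun i hi => congrArg f ?_
  rw [mem_range] at hi
  omega

end DoubleSums

section PartialSums

variable {α : Type*} [AddCommGroup α] [LinearOrder α] [IsOrderedAddMonoid α]
  {f : ℕ → α} {m n : ℕ}

lemma abs_sum_range_succ_of_lt (hf : ∀ j < n, j ≠ m → 0 ≤ f j) (hmn : m ≤ n) {i : ℕ}
    (hi : i < m) : |∑ j ∈ range (i + 1), f j| = ∑ j ∈ range (i + 1), f j :=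
  abs_of_nonneg <| sum_nonneg fun j hj => by
    rw [mem_range] at hj
    exact hf j (by omega) (by omega)

lemma abs_sum_range_succ_of_le (hsum : ∑ j ∈ range n, f j = 0)
    (hf : ∀ j < n, j ≠ m → 0 ≤ f j) {i : ℕ} (hmi : m ≤ i) (hin : i < n) :
    |∑ j ∈ range (i + 1), f j| = ∑ j ∈ Ico (i + 1) n, f j := by
  have hsplit := (sum_range_add_sum_Ico f (show i + 1 ≤ n by omega)).trans hsum
  rw [eq_neg_of_add_eq_zero_left hsplit, abs_neg]
  exact abs_of_nonneg <| sum_nonneg fun j hj => by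
    rw [mem_Ico] at hj
    exact hf j hj.2 (by omega)

lemma sum_abs_sum_range_succ (hsum : ∑ j ∈ range n, f j = 0)
    (hf : ∀ j < n, j ≠ m → 0 ≤ f j) (hmn : m ≤ n) :
    ∑ i ∈ range n, |∑ j ∈ range (i + 1), f j| =
      ∑ i ∈ range m, ∑ j ∈ range (i + 1), f j + ∑ i ∈ Ico m n, ∑ j ∈ Ico (i + 1) n, f j := by
  rw [← sum_range_add_sum_Ico _ hmn]
  congr 1
  · exact sum_congr rfl fun i hi => abs_sum_range_succ_of_lt hf hmn (mem_range.mp hi)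
  · exact sum_congr rfl fun i hi =>
      abs_sum_range_succ_of_le hsum hf (mem_Ico.mp hi).1 (mem_Ico.mp hi).2

end PartialSums

/-- If `S` has exactly one negative element and total sum zero, then for
any permutation `π` of `S` whose negative element sits at (1-based) position `k`, the
objective decomposes as
`∑_{i=1}^n |P_i| = ∑_{i=1}^{k-1} π(i)·(k-i) + ∑_{i=1}^{n-k} π(n-i+1)·(n-k-i+1)`
(0-based indexing of `π`). -/
theorem stmt_9 (n : ℕ) (s π : ℕ → ℝ)
    (hperm : Multiset.map π (Multiset.range n) = Multiset.map s (Multiset.range n))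
    (honeneg : ((Finset.range n).filter (fun i => s i < 0)).card = 1)
    (hsum : ∑ i ∈ Finset.range n, s i = 0)
    (k : ℕ) (hk1 : 1 ≤ k) (hk2 : k ≤ n) (hkneg : π (k - 1) < 0) :
    ∑ i ∈ Finset.range n, |∑ j ∈ Finset.range (i + 1), π j| =
      (∑ i ∈ Finset.range (k - 1), π i * ((k : ℝ) - (i + 1))) +
        ∑ i ∈ Finset.range (n - k), π (n - (i + 1)) * ((n : ℝ) - k - i) := by
  obtain ⟨m, rfl⟩ : ∃ m, k = m + 1 := ⟨k - 1, by omega⟩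
  rw [Nat.add_sub_cancel] at hkneg ⊢
  have hπsum : ∑ i ∈ range n, π i = 0 := (congrArg Multiset.sum hperm).trans hsum
  have hcard := (card_filter_range_eq_of_map_range_eq hperm (· < 0)).trans honeneg
  have hnonneg : ∀ j < n, j ≠ m → 0 ≤ π j := fun j hj hjm => not_lt.mp <|
    Finset.not_of_card_filter_eq_one hcard (mem_range.mpr hk2) hkneg (mem_range.mpr hj) hjm
  rw [sum_abs_sum_range_succ hπsum hnonneg (by omega), sum_range_sum_range_succ,
    sum_Ico_sum_Ico_succ, sum_Ico_eq_sum_range_reflect]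
  congr 1
  · refine sum_congr rfl fun j hj => ?_
    rw [nsmul_eq_mul, Nat.cast_sub (mem_range.mp hj).le]
    push_cast
    ring
  · refine sum_congr rfl fun i hi => ?_
    rw [mem_range] at hi
    rw [nsmul_eq_mul, show n - (i + 1) - m = n - (m + 1) - i by omega,
      Nat.cast_sub (by omega), Nat.cast_sub hk2]
    push_cast
    ring
end

section
/- Let S be a multiset of n real numbers containing exactly one negative element and with total sum zero. The permutation that places the negative element at position ⌊n/2⌋, and the positive elements sorted non-decreasingly alternately at positions 1, n, 2, n−1, 3, n−2, … minimizes ∑_{i=1}^n |P_i^π| over all permutations π of S. -/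
/-!
Fix an arrangement `π` and let `m` be the position of the negative element. Since every other
entry is nonnegative and the total is zero, `|P_i|` is the sum of the entries on the far side of
`i` from `m`, so the objective is `∑_v` (sum of the entries at distance `> v` from `m`). At least
`n - 1 - 2v` positions lie at distance `> v`, so each inner sum is at least the sum of the
`n - 1 - 2v` smallest remaining elements, and the zigzag arrangement around `⌊n/2⌋` puts exactly
those elements there.
-/

open Finset

theorem Multiset.exists_mem_map_erase_eq {β γ : Type*} [DecidableEq β] {f : β → γ}
    {s : Multiset β} {x : γ} {t : Multiset γ} (h : s.map f = x ::ₘ t) :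
    ∃ m ∈ s, f m = x ∧ (s.erase m).map f = t := by
  obtain ⟨m, hm, rfl⟩ := Multiset.mem_map.1 (h ▸ Multiset.mem_cons_self _ t)
  rw [← Multiset.cons_erase hm, Multiset.map_cons] at h
  exact ⟨m, hm, rfl, Multiset.cons_inj_right _ |>.1 h⟩

theorem sum_range_card_le_sum_of_le_map_range {α : Type*} [AddCommMonoid α]
    [PartialOrder α] [IsOrderedAddMonoid α] {a : ℕ → α} {N : ℕ}
    (ha : MonotoneOn a (Set.Iio N))
    {t : Multiset α} (ht : t ≤ (Multiset.range N).map a) :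
    ∑ i ∈ range (Multiset.card t), a i ≤ t.sum := by
  induction N generalizing t with
  | zero => simp_all
  | succ N ih =>
    have ha' : MonotoneOn a (Set.Iio N) := ha.mono (Set.Iio_subset_Iio N.le_succ)
    rw [Multiset.range_succ, Multiset.map_cons] at ht
    by_cases hN : a N ∈ t
    · obtain ⟨t', rfl⟩ := Multiset.exists_cons_of_mem hN
      rw [Multiset.cons_le_cons_iff] at ht
      have hcard : Multiset.card t' ≤ N := by
        simpa using Multiset.card_le_card ht
      rw [Multiset.card_cons, sum_range_succ, Multiset.sum_cons, add_comm (a N)]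
      exact add_le_add (ih ha' ht) (ha (by simp; omega) (by simp) hcard)
    · exact ih ha' ((Multiset.le_cons_of_notMem hN).1 ht)

/-- The positions `j < n` with `|j - m| > v`. -/
def farPositions (n m v : ℕ) : Finset ℕ := range (m - v) ∪ Ico (m + v + 1) n

lemma disjoint_farPositions (n m v : ℕ) : Disjoint (range (m - v)) (Ico (m + v + 1) n) := by
  rw [disjoint_left]
  intro j hj hj'
  simp only [mem_range, mem_Ico] at hj hj'
  omega

lemma farPositions_subset_erase {n m : ℕ} (hm : m < n) (v : ℕ) :
    farPositions n m v ⊆ (range n).erase m := by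
  intro j hj
  simp only [farPositions, mem_union, mem_range, mem_Ico, mem_erase] at hj ⊢
  omega

lemma le_card_farPositions (n m v : ℕ) : n - 1 - 2 * v ≤ #(farPositions n m v) := by
  rw [farPositions, card_union_of_disjoint (disjoint_farPositions n m v), card_range, Nat.card_Ico]
  omega

lemma farPositions_zero {n m : ℕ} (hm : m < n) : farPositions n m 0 = (range n).erase m := by
  ext j
  simp only [farPositions, mem_union, mem_range, mem_Ico, mem_erase]
  omega

section PrefixSums

variable {α : Type*} [AddCommGroup α] [LinearOrder α] [IsOrderedAddMonoid α]

/-- `f j` enters `|P_i|` once for each `i` between `j` and `m`, i.e. `|j - m|` times; grouping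
these contributions by the threshold `v < |j - m|` gives the right-hand side. -/
theorem sum_abs_prefix_sum_eq_sum_farPositions {n m : ℕ} {f : ℕ → α} (hm : m < n)
    (hf0 : ∑ j ∈ range n, f j = 0) (hf : ∀ j < n, j ≠ m → 0 ≤ f j) :
    ∑ i ∈ range n, |∑ j ∈ range (i + 1), f j| =
      ∑ v ∈ range n, ∑ j ∈ farPositions n m v, f j := by
  have hleft : ∀ i < m, |∑ j ∈ range (i + 1), f j| = ∑ j ∈ range (i + 1), f j :=
    fun i hi => abs_of_nonneg <| sum_nonneg fun j hj =>
      hf j (by simp at hj; omega) (by simp at hj; omega)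
  have hright : ∀ i, m ≤ i → i < n →
      |∑ j ∈ range (i + 1), f j| = ∑ j ∈ Ico (i + 1) n, f j := by
    intro i hmi hin
    have hsplit := sum_range_add_sum_Ico f (show i + 1 ≤ n by omega)
    rw [eq_neg_of_add_eq_zero_left (hsplit.trans hf0), abs_neg]
    exact abs_of_nonneg <| sum_nonneg fun j hj => hf j (by simp at hj; omega) (by simp at hj; omega)
  calc ∑ i ∈ range n, |∑ j ∈ range (i + 1), f j|
      = ∑ i ∈ range m, |∑ j ∈ range (i + 1), f j|
          + ∑ i ∈ Ico m n, |∑ j ∈ range (i + 1), f j| :=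
        (sum_range_add_sum_Ico _ hm.le).symm
    _ = ∑ v ∈ range m, ∑ j ∈ range (m - v), f j
          + ∑ v ∈ range (n - m), ∑ j ∈ Ico (m + v + 1) n, f j := by
        congr 1
        · rw [← sum_range_reflect]
          refine sum_congr rfl fun v hv => ?_
          rw [mem_range] at hv
          rw [hleft _ (by omega), show m - 1 - v + 1 = m - v by omega]
        · rw [sum_Ico_eq_sum_range]
          refine sum_congr rfl fun v hv => ?_
          rw [mem_range] at hv
          rw [hright _ (by omega) (by omega), add_right_comm]
    _ = ∑ v ∈ range n, ∑ j ∈ range (m - v), f j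
          + ∑ v ∈ range n, ∑ j ∈ Ico (m + v + 1) n, f j := by
        congr 1 <;> refine sum_subset (range_subset_range.2 (by omega)) fun v _ hv => ?_
        · rw [mem_range] at hv
          rw [show m - v = 0 by omega, range_zero, sum_empty]
        · rw [mem_range] at hv
          rw [Ico_eq_empty (by omega), sum_empty]
    _ = ∑ v ∈ range n, ∑ j ∈ farPositions n m v, f j := by
        rw [← sum_add_distrib]
        exact sum_congr rfl fun v _ => (sum_union (disjoint_farPositions n m v)).symm

end PrefixSums

theorem sum_range_le_sum_farPositions {α : Type*} [AddCommMonoid α] [PartialOrder α]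
    [IsOrderedAddMonoid α] {n m : ℕ} {π a : ℕ → α} (hm : m < n)
    (hrest : Multiset.map π ((Multiset.range n).erase m) = Multiset.map a (Multiset.range (n - 1)))
    (ha : ∀ i < n - 1, 0 ≤ a i) (hmono : MonotoneOn a (Set.Iio (n - 1))) (v : ℕ) :
    ∑ j ∈ range (n - 1 - 2 * v), a j ≤ ∑ p ∈ farPositions n m v, π p := by
  have hsub : (farPositions n m v).val ≤ (Multiset.range n).erase m := by
    rw [← range_val, ← erase_val]
    exact val_le_iff.2 (farPositions_subset_erase hm v)
  have hcard : #(farPositions n m v) ≤ n - 1 := by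
    simpa [card_erase_of_mem (mem_range.2 hm)] using card_le_card (farPositions_subset_erase hm v)
  calc ∑ j ∈ range (n - 1 - 2 * v), a j ≤ ∑ j ∈ range #(farPositions n m v), a j :=
        sum_le_sum_of_subset_of_nonneg (range_subset_range.2 (le_card_farPositions n m v))
          fun j hj _ => ha j (by simp at hj; omega)
    _ ≤ ∑ p ∈ farPositions n m v, π p := by
        simpa using sum_range_card_le_sum_of_le_map_range hmono
          ((Multiset.map_le_map hsub).trans_eq hrest)

/-- The index `j` of the element `a j` that the zigzag arrangement puts at position `p`. -/
def zigzagRank (n p : ℕ) : ℕ := if p < n / 2 then 2 * p else 2 * (n - 1 - p) + 1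

section Zigzag

variable {α : Type*} {n : ℕ} {π' a : ℕ → α}

lemma eq_zigzagRank
    (hπa : ∀ j, j < n - 1 →
      (j % 2 = 0 → π' (j / 2) = a j) ∧ (j % 2 = 1 → π' (n - 1 - j / 2) = a j))
    {p : ℕ} (hp : p < n) (hpm : p ≠ n / 2) :
    zigzagRank n p < n - 1 ∧ π' p = a (zigzagRank n p) := by
  unfold zigzagRank
  split_ifs with h
  · refine ⟨by omega, ?_⟩
    simpa using (hπa (2 * p) (by omega)).1 (by omega)
  · refine ⟨by omega, ?_⟩
    have := (hπa (2 * (n - 1 - p) + 1) (by omega)).2 (by omega)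
    rwa [show n - 1 - (2 * (n - 1 - p) + 1) / 2 = p by omega] at this

lemma sum_farPositions_half [AddCommMonoid α]
    (hπa : ∀ j, j < n - 1 →
      (j % 2 = 0 → π' (j / 2) = a j) ∧ (j % 2 = 1 → π' (n - 1 - j / 2) = a j)) (v : ℕ) :
    ∑ p ∈ farPositions n (n / 2) v, π' p = ∑ j ∈ range (n - 1 - 2 * v), a j := by
  refine sum_nbij' (zigzagRank n) (fun j => if j % 2 = 0 then j / 2 else n - 1 - j / 2)
    ?_ ?_ ?_ ?_ ?_
  rotate_left 4
  · intro p hp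
    simp only [farPositions, mem_union, mem_range, mem_Ico] at hp
    exact (eq_zigzagRank hπa (by omega) (by omega)).2
  all_goals
    intro p hp
    simp only [farPositions, zigzagRank, mem_union, mem_range, mem_Ico] at hp ⊢
    split_ifs <;> omega

end Zigzag

theorem stmt_10_general (n : ℕ) (s : ℕ → ℝ) (x : ℝ) (a : ℕ → ℝ)
    (ha : ∀ i, i < n - 1 → 0 ≤ a i)
    (hmono : ∀ i j, i ≤ j → j < n - 1 → a i ≤ a j)
    (hS : Multiset.map s (Multiset.range n) = x ::ₘ Multiset.map a (Multiset.range (n - 1)))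
    (hsum : ∑ i ∈ Finset.range n, s i = 0)
    (π' : ℕ → ℝ)
    (hπx : π' (n / 2) = x)
    (hπa : ∀ j, j < n - 1 →
      (j % 2 = 0 → π' (j / 2) = a j) ∧ (j % 2 = 1 → π' (n - 1 - j / 2) = a j)) :
    ∀ π : ℕ → ℝ, Multiset.map π (Multiset.range n) = Multiset.map s (Multiset.range n) →
      ∑ i ∈ Finset.range n, |∑ j ∈ Finset.range (i + 1), π' j| ≤
        ∑ i ∈ Finset.range n, |∑ j ∈ Finset.range (i + 1), π j| := by
  intro π hπ
  obtain ⟨m, hm, -, hrest⟩ := Multiset.exists_mem_map_erase_eq (hπ.trans hS)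
  rw [Multiset.mem_range] at hm
  have hxa : x + ∑ j ∈ range (n - 1), a j = 0 :=
    (Multiset.sum_cons x _ ▸ congrArg Multiset.sum hS).symm.trans hsum
  have hπsum : ∑ j ∈ range n, π j = 0 := (congrArg Multiset.sum hπ).trans hsum
  have hπ'sum : ∑ j ∈ range n, π' j = 0 := by
    rw [← add_sum_erase _ _ (mem_range.2 (show n / 2 < n by omega)), hπx,
      ← farPositions_zero (by omega), sum_farPositions_half hπa, Nat.mul_zero, Nat.sub_zero, hxa]
  have hπ_nonneg : ∀ p < n, p ≠ m → 0 ≤ π p := by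
    intro p hp hpm
    obtain ⟨j, hj, hja⟩ := Multiset.mem_map.1 (hrest ▸ Multiset.mem_map_of_mem π
      (Multiset.mem_erase_of_ne hpm |>.2 (Multiset.mem_range.2 hp)))
    exact hja ▸ ha j (Multiset.mem_range.1 hj)
  have hπ'_nonneg : ∀ p < n, p ≠ n / 2 → 0 ≤ π' p := fun p hp hpm =>
    have ⟨hj, hja⟩ := eq_zigzagRank hπa hp hpm
    hja ▸ ha _ hj
  calc ∑ i ∈ range n, |∑ j ∈ range (i + 1), π' j|
      = ∑ v ∈ range n, ∑ j ∈ range (n - 1 - 2 * v), a j := by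
        rw [sum_abs_prefix_sum_eq_sum_farPositions (by omega) hπ'sum hπ'_nonneg]
        exact sum_congr rfl fun v _ => sum_farPositions_half hπa v
    _ ≤ ∑ v ∈ range n, ∑ p ∈ farPositions n m v, π p :=
        sum_le_sum fun v _ => sum_range_le_sum_farPositions hm hrest ha
          (fun i hi j hj hij => hmono i j hij hj) v
    _ = ∑ i ∈ range n, |∑ j ∈ range (i + 1), π j| :=
        (sum_abs_prefix_sum_eq_sum_farPositions hm hπsum hπ_nonneg).symm

/-- For a multiset `S` of `n` reals with exactly one negative element `x`
and total sum zero, the permutation `π'` that places `x` at the middle position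
`⌊n/2⌋` (0-based) and places the remaining (nonnegative) elements, sorted
non-decreasingly as `a 0 ≤ a 1 ≤ …`, alternately at the positions
`1, n, 2, n-1, 3, n-2, …` (0-based: `0, n-1, 1, n-2, …`) minimizes the sum of
absolute prefix sums over all permutations `π` of `S`. -/
theorem stmt_10 (n : ℕ) (hn : 0 < n) (s : ℕ → ℝ) (x : ℝ) (a : ℕ → ℝ)
    (hx : x < 0)
    (ha : ∀ i, i < n - 1 → 0 ≤ a i)
    (hmono : ∀ i j, i ≤ j → j < n - 1 → a i ≤ a j)
    (hS : Multiset.map s (Multiset.range n) = x ::ₘ Multiset.map a (Multiset.range (n - 1)))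
    (hsum : ∑ i ∈ Finset.range n, s i = 0)
    (π' : ℕ → ℝ)
    (hπx : π' (n / 2) = x)
    (hπa : ∀ j, j < n - 1 →
      (j % 2 = 0 → π' (j / 2) = a j) ∧ (j % 2 = 1 → π' (n - 1 - j / 2) = a j)) :
    ∀ π : ℕ → ℝ, Multiset.map π (Multiset.range n) = Multiset.map s (Multiset.range n) →
      ∑ i ∈ Finset.range n, |∑ j ∈ Finset.range (i + 1), π' j| ≤
        ∑ i ∈ Finset.range n, |∑ j ∈ Finset.range (i + 1), π j| :=
  stmt_10_general n s x a ha hmono hS hsum π' hπx hπa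
end

section
/- Given an instance S = {s₁,…,sₙ} of Min-∑|Prefixsum|, define for each i the 2-time-series fᵢ with fᵢ(1)=0, fᵢ(2)=sᵢ if sᵢ ≥ 0, and fᵢ(1)=−sᵢ, fᵢ(2)=0 otherwise. Then for every permutation π, the total wiggle ∑_{i=1}^n |W_{i,1}^π| of the stacked area chart for F = {f₁,…,fₙ} equals ∑_{i=1}^n |∑_{j=1}^i π(j)| for the corresponding permutation of S. In particular, S has a solution of value x iff F has a 1-WiggleMin solution of value x. -/
/-- Reduction from Min-∑|Prefixsum| to 1-WiggleMin on two time points: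
with `f i` the 2-time-series `(0, s i)` if `s i ≥ 0` and `(-s i, 0)` otherwise, for
every permutation `π` of the indices `{0,…,n-1}` the total wiggle
`∑_i |W_{i,1}|` equals the sum of absolute prefix sums of `s ∘ π`; in particular the
instances have the same solution values. -/
theorem stmt_11 (n : ℕ) (s : ℕ → ℝ) (f : ℕ → ℕ → ℝ)
    (hf : ∀ i < n, (0 ≤ s i → f i 1 = 0 ∧ f i 2 = s i) ∧
      (s i < 0 → f i 1 = -s i ∧ f i 2 = 0)) :
    (∀ π : ℕ → ℕ, Multiset.map π (Multiset.range n) = Multiset.range n →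
      ∑ i ∈ Finset.range n, |∑ k ∈ Finset.range (i + 1), (f (π k) 2 - f (π k) 1)| =
        ∑ i ∈ Finset.range n, |∑ k ∈ Finset.range (i + 1), s (π k)|) ∧
    (∀ x : ℝ,
      (∃ π : ℕ → ℕ, Multiset.map π (Multiset.range n) = Multiset.range n ∧
        ∑ i ∈ Finset.range n, |∑ k ∈ Finset.range (i + 1), s (π k)| = x) ↔
      (∃ π : ℕ → ℕ, Multiset.map π (Multiset.range n) = Multiset.range n ∧
        ∑ i ∈ Finset.range n, |∑ k ∈ Finset.range (i + 1), (f (π k) 2 - f (π k) 1)| = x)) := by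
  have key : ∀ i < n, f i 2 - f i 1 = s i := by
    intro i hi
    rcases le_or_gt 0 (s i) with h | h
    · obtain ⟨h1, h2⟩ := (hf i hi).1 h; rw [h1, h2]; ring
    · obtain ⟨h1, h2⟩ := (hf i hi).2 h; rw [h1, h2]; ring
  have main : ∀ π : ℕ → ℕ, Multiset.map π (Multiset.range n) = Multiset.range n →
      ∑ i ∈ Finset.range n, |∑ k ∈ Finset.range (i + 1), (f (π k) 2 - f (π k) 1)| =
        ∑ i ∈ Finset.range n, |∑ k ∈ Finset.range (i + 1), s (π k)| := by
    intro π hπ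
    have hmem : ∀ k < n, π k < n := by
      intro k hk
      have : π k ∈ Multiset.map π (Multiset.range n) :=
        Multiset.mem_map_of_mem π (Multiset.mem_range.mpr hk)
      rw [hπ, Multiset.mem_range] at this
      exact this
    apply Finset.sum_congr rfl
    intro i hi
    rw [Finset.mem_range] at hi
    congr 1
    apply Finset.sum_congr rfl
    intro k hk
    rw [Finset.mem_range] at hk
    exact key (π k) (hmem k (lt_of_lt_of_le hk hi))
  refine ⟨main, fun x => ⟨fun ⟨π, hπ, hx⟩ => ⟨π, hπ, by rw [main π hπ, hx]⟩,
    fun ⟨π, hπ, hx⟩ => ⟨π, hπ, by rw [← main π hπ, hx]⟩⟩⟩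
end

section
/- Let F be a balanced set of n ℓ-time series with maximum data point value M, and define F' on 4ℓ+1 time points by f'ᵢ(1)=M and inductively f'ᵢ(4j−2)=f'ᵢ(4j−3)+δᵢⱼ, f'ᵢ(4j−1)=f'ᵢ(4j−2)−δᵢⱼ, f'ᵢ(4j)=f'ᵢ(4j−1)−δᵢⱼ, f'ᵢ(4j+1)=f'ᵢ(4j)+δᵢⱼ where δᵢⱼ = fᵢ(j+1)−fᵢ(j). Then for the corresponding permutations, the weighted p-wiggle of F' equals 4M times the p-wiggle of F; hence F has a p-WiggleMin solution of value x iff F' has a Weighted-p-WiggleMin solution of value 4Mx. -/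
/-- Splitting a sum over `Icc 1 (4L)` into groups of four. -/
lemma sum4_aux (L : ℕ) (g : ℕ → ℝ) :
    ∑ m ∈ Finset.Icc 1 (4 * L), g m =
      ∑ j ∈ Finset.Icc 1 L, (g (4 * j - 3) + g (4 * j - 2) + g (4 * j - 1) + g (4 * j)) := by
  induction L with
  | zero => simp
  | succ L ih =>
    rw [show 4 * (L + 1) = (4 * L + 3) + 1 by ring, Finset.sum_Icc_succ_top (by omega),
        show 4 * L + 3 = (4 * L + 2) + 1 by ring, Finset.sum_Icc_succ_top (by omega),
        show 4 * L + 2 = (4 * L + 1) + 1 by ring, Finset.sum_Icc_succ_top (by omega),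
        show 4 * L + 1 = (4 * L) + 1 by ring, Finset.sum_Icc_succ_top (by omega),
        ih, show L + 1 = L + 1 by rfl, Finset.sum_Icc_succ_top (by omega)]
    have h1 : 4 * (L + 1) - 3 = 4 * L + 1 := by omega
    have h2 : 4 * (L + 1) - 2 = 4 * L + 2 := by omega
    have h3 : 4 * (L + 1) - 1 = 4 * L + 3 := by omega
    have h4 : 4 * (L + 1) = 4 * L + 4 := by omega
    rw [h1, h2, h3, h4]
    rw [show 4 * L + 1 + 1 + 1 + 1 = 4 * L + 4 by omega,
        show 4 * L + 1 + 1 + 1 = 4 * L + 3 by omega,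
        show 4 * L + 1 + 1 = 4 * L + 2 by omega]
    ring

lemma perm_sum_aux (n : ℕ) (π : ℕ → ℕ)
    (hπ : Multiset.map π (Multiset.range n) = Multiset.range n)
    (g : ℕ → ℝ) : ∑ k ∈ Finset.range n, g (π k) = ∑ k ∈ Finset.range n, g k := by
  calc ∑ k ∈ Finset.range n, g (π k)
      = (((Multiset.range n).map π).map g).sum := by
        rw [Multiset.map_map]; rfl
    _ = ((Multiset.range n).map g).sum := by rw [hπ]
    _ = ∑ k ∈ Finset.range n, g k := rfl


open Finset in
/-- Wiggle value `W_{i,j}` (border above the `i+1` lowest series, between time `j` and `j+1`). -/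
noncomputable def wiggleVal12 (f : ℕ → ℕ → ℝ) (π : ℕ → ℕ) (i j : ℕ) : ℝ :=
  ∑ k ∈ Finset.range (i + 1), (f (π k) (j + 1) - f (π k) j)

open Finset in
/-- Total `p`-wiggle of `n` stacked `ℓ`-time series (time points `1,…,ℓ`). -/
noncomputable def wiggle12 (p n ℓ : ℕ) (f : ℕ → ℕ → ℝ) (π : ℕ → ℕ) : ℝ :=
  ∑ i ∈ Finset.range n, ∑ j ∈ Finset.Icc 1 (ℓ - 1), |wiggleVal12 f π i j| ^ p

open Finset in
/-- Total weighted `p`-wiggle; the series above the topmost one is identically zero. -/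
noncomputable def wwiggle12 (p n ℓ : ℕ) (f : ℕ → ℕ → ℝ) (π : ℕ → ℕ) : ℝ :=
  ∑ i ∈ Finset.range n, ∑ j ∈ Finset.Icc 1 (ℓ - 1),
    ((f (π i) j + f (π i) (j + 1) +
        (if i + 1 < n then f (π (i + 1)) j + f (π (i + 1)) (j + 1) else 0)) / 4) *
      |wiggleVal12 f π i j| ^ p

/-- For a balanced set `F` of `n` time series (time points `1,…,ℓ`),
with nonnegative data bounded by the maximum value `M > 0`, the set `F'` built from
`F` by the four-step construction (`F' i 1 = M` and the `±δᵢⱼ` updates) satisfies,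
for every permutation (with corresponding permutations on both sides), that the
weighted `p`-wiggle of `F'` equals `4M` times the `p`-wiggle of `F`; hence `F` has a
`p`-WiggleMin solution of value `x` iff `F'` has a Weighted-`p`-WiggleMin solution of
value `4Mx`. -/
theorem stmt_12 (p n ℓ : ℕ) (hp : 0 < p) (hℓ : 1 ≤ ℓ) (M : ℝ) (hM : 0 < M)
    (F F' : ℕ → ℕ → ℝ)
    (hnonneg : ∀ i < n, ∀ j, 1 ≤ j → j ≤ ℓ → 0 ≤ F i j)
    (hbound : ∀ i < n, ∀ j, 1 ≤ j → j ≤ ℓ → F i j ≤ M)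
    (hattain : ∃ i < n, ∃ j, 1 ≤ j ∧ j ≤ ℓ ∧ F i j = M)
    (hbal : ∀ j j', 1 ≤ j → j ≤ ℓ → 1 ≤ j' → j' ≤ ℓ →
      ∑ i ∈ Finset.range n, F i j = ∑ i ∈ Finset.range n, F i j')
    (hF'1 : ∀ i < n, F' i 1 = M)
    (hF' : ∀ i < n, ∀ j, 1 ≤ j → j ≤ ℓ - 1 →
      F' i (4 * j - 2) = F' i (4 * j - 3) + (F i (j + 1) - F i j) ∧
      F' i (4 * j - 1) = F' i (4 * j - 2) - (F i (j + 1) - F i j) ∧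
      F' i (4 * j) = F' i (4 * j - 1) - (F i (j + 1) - F i j) ∧
      F' i (4 * j + 1) = F' i (4 * j) + (F i (j + 1) - F i j)) :
    (∀ π : ℕ → ℕ, Multiset.map π (Multiset.range n) = Multiset.range n →
      wwiggle12 p n (4 * (ℓ - 1) + 1) F' π = 4 * M * wiggle12 p n ℓ F π) ∧
    (∀ x : ℝ,
      (∃ π : ℕ → ℕ, Multiset.map π (Multiset.range n) = Multiset.range n ∧
        wiggle12 p n ℓ F π = x) ↔
      (∃ π : ℕ → ℕ, Multiset.map π (Multiset.range n) = Multiset.range n ∧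
        wwiggle12 p n (4 * (ℓ - 1) + 1) F' π = 4 * M * x)) := by
  -- `F'` returns to `M` at every point `4j-3`
  have hbase : ∀ j, 1 ≤ j → j ≤ ℓ → ∀ i, i < n → F' i (4 * j - 3) = M := by
    intro j
    induction j with
    | zero => intro h; omega
    | succ j ih =>
      intro _ h2 i hi
      by_cases hj : j = 0
      · subst hj; simpa using hF'1 i hi
      · have hj1 : 1 ≤ j := Nat.one_le_iff_ne_zero.mpr hj
        have hjl : j ≤ ℓ - 1 := by omega
        obtain ⟨e1, e2, e3, e4⟩ := hF' i hi j hj1 hjl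
        have hidx : 4 * (j + 1) - 3 = 4 * j + 1 := by omega
        have hM' := ih hj1 (by omega) i hi
        rw [hidx, e4, e3, e2, e1, hM']
        ring
  -- explicit values of `F'` within a group of four
  have hvals : ∀ j, 1 ≤ j → j ≤ ℓ - 1 → ∀ i, i < n →
      F' i (4 * j - 3) = M ∧ F' i (4 * j - 2) = M + (F i (j + 1) - F i j) ∧
      F' i (4 * j - 1) = M ∧ F' i (4 * j) = M - (F i (j + 1) - F i j) ∧
      F' i (4 * j + 1) = M := by
    intro j h1 h2 i hi
    have hb := hbase j h1 (by omega) i hi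
    obtain ⟨e1, e2, e3, e4⟩ := hF' i hi j h1 h2
    refine ⟨hb, by rw [e1, hb], by rw [e2, e1, hb]; ring,
      by rw [e3, e2, e1, hb]; ring, by rw [e4, e3, e2, e1, hb]; ring⟩
  have hπlt : ∀ (π : ℕ → ℕ), Multiset.map π (Multiset.range n) = Multiset.range n →
      ∀ k, k < n → π k < n := by
    intro π hπ k hk
    have : π k ∈ Multiset.map π (Multiset.range n) :=
      Multiset.mem_map_of_mem _ (Multiset.mem_range.mpr hk)
    rw [hπ, Multiset.mem_range] at this
    exact this
  have main : ∀ π : ℕ → ℕ, Multiset.map π (Multiset.range n) = Multiset.range n →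
      wwiggle12 p n (4 * (ℓ - 1) + 1) F' π = 4 * M * wiggle12 p n ℓ F π := by
    intro π hπ
    have hlt := hπlt π hπ
    unfold wwiggle12 wiggle12
    rw [Finset.mul_sum]
    apply Finset.sum_congr rfl
    intro i hi
    rw [Finset.mem_range] at hi
    rw [show 4 * (ℓ - 1) + 1 - 1 = 4 * (ℓ - 1) by omega, sum4_aux (ℓ - 1), Finset.mul_sum]
    apply Finset.sum_congr rfl
    intro j hj
    rw [Finset.mem_Icc] at hj
    have hv : ∀ k, k < n →
        F' k (4 * j - 3) = M ∧ F' k (4 * j - 2) = M + (F k (j + 1) - F k j) ∧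
        F' k (4 * j - 1) = M ∧ F' k (4 * j) = M - (F k (j + 1) - F k j) ∧
        F' k (4 * j + 1) = M := fun k hk => hvals j hj.1 hj.2 k hk
    have i1 : 4 * j - 3 + 1 = 4 * j - 2 := by omega
    have i2 : 4 * j - 2 + 1 = 4 * j - 1 := by omega
    have i3 : 4 * j - 1 + 1 = 4 * j := by omega
    -- wiggle values of F' on the four sub-intervals
    have e1 : wiggleVal12 F' π i (4 * j - 3) = wiggleVal12 F π i j := by
      unfold wiggleVal12
      apply Finset.sum_congr rfl
      intro k hk
      rw [Finset.mem_range] at hk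
      obtain ⟨a1, a2, _, _, _⟩ := hv (π k) (hlt k (by omega))
      rw [i1, a2, a1]; ring
    have e2 : wiggleVal12 F' π i (4 * j - 2) = -wiggleVal12 F π i j := by
      unfold wiggleVal12
      rw [← Finset.sum_neg_distrib]
      apply Finset.sum_congr rfl
      intro k hk
      rw [Finset.mem_range] at hk
      obtain ⟨_, a2, a3, _, _⟩ := hv (π k) (hlt k (by omega))
      rw [i2, a3, a2]; ring
    have e3 : wiggleVal12 F' π i (4 * j - 1) = -wiggleVal12 F π i j := by
      unfold wiggleVal12
      rw [← Finset.sum_neg_distrib]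
      apply Finset.sum_congr rfl
      intro k hk
      rw [Finset.mem_range] at hk
      obtain ⟨_, _, a3, a4, _⟩ := hv (π k) (hlt k (by omega))
      rw [i3, a4, a3]; ring
    have e4 : wiggleVal12 F' π i (4 * j) = wiggleVal12 F π i j := by
      unfold wiggleVal12
      apply Finset.sum_congr rfl
      intro k hk
      rw [Finset.mem_range] at hk
      obtain ⟨_, _, _, a4, a5⟩ := hv (π k) (hlt k (by omega))
      rw [a5, a4]; ring
    obtain ⟨a1, a2, a3, a4, a5⟩ := hv (π i) (hlt i hi)
    by_cases hi1 : i + 1 < n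
    · obtain ⟨b1, b2, b3, b4, b5⟩ := hv (π (i + 1)) (hlt (i + 1) hi1)
      simp only [if_pos hi1, e1, e2, e3, e4, abs_neg, i1, i2, i3,
        a1, a2, a3, a4, a5, b1, b2, b3, b4, b5]
      ring
    · -- top border: the wiggle value vanishes by balance
      have hW0 : wiggleVal12 F π i j = 0 := by
        have hin : i + 1 = n := by omega
        unfold wiggleVal12
        rw [hin, perm_sum_aux n π hπ (fun k => F k (j + 1) - F k j),
          Finset.sum_sub_distrib,
          hbal (j + 1) j (by omega) (by omega) (by omega) (by omega), sub_self]
      simp only [if_neg hi1, e1, e2, e3, e4, hW0, abs_neg, abs_zero,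
        zero_pow hp.ne', mul_zero, add_zero, zero_add]
  refine ⟨main, fun x => ⟨?_, ?_⟩⟩
  · rintro ⟨π, hπ, hx⟩
    exact ⟨π, hπ, by rw [main π hπ, hx]⟩
  · rintro ⟨π, hπ, hx⟩
    refine ⟨π, hπ, ?_⟩
    rw [main π hπ] at hx
    have h4M : (4 : ℝ) * M ≠ 0 := by positivity
    exact mul_left_cancel₀ h4M hx
end

section
/- Let G = (V,E) be a graph with V = {v₁,…,vₙ}, E = {e₁,…,e_m}, and let F = {f₁,…,fₙ} be the (m+1)-time series defined by fᵢ(1)=m and, for each edge e_{j−1}={v_a,v_b} with a<b: f_a(j)=f_a(j−1)+1, f_b(j)=f_b(j−1)−1, and fᵢ(j)=fᵢ(j−1) otherwise. Then for every permutation π^V of V and the corresponding permutation π^F of F, and every positive integer p: ∑_{i=1}^n ∑_{j=1}^m |W_{i,j}^{π^F}|^p = ∑_{{u,v}∈E} |pos_{π^V}(u) − pos_{π^V}(v)|. -/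
lemma aux1 (p n A B : ℕ) (hp : 0 < p) (hAB : A < B) (hB : B < n) :
    ∑ i ∈ Finset.range n,
      |(if A ≤ i then (1:ℝ) else 0) - (if B ≤ i then (1:ℝ) else 0)| ^ p
      = (B : ℝ) - A := by
  have h : ∀ i ∈ Finset.range n,
      |(if A ≤ i then (1:ℝ) else 0) - (if B ≤ i then (1:ℝ) else 0)| ^ p
        = if i ∈ Finset.Ico A B then (1:ℝ) else 0 := by
    intro i _
    by_cases h1 : A ≤ i <;> by_cases h2 : B ≤ i
    · rw [if_pos h1, if_pos h2, if_neg (by simp [Finset.mem_Ico]; omega),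
        sub_self, abs_zero, zero_pow hp.ne']
    · rw [if_pos h1, if_neg h2, if_pos (by simp [Finset.mem_Ico]; omega),
        sub_zero, abs_one, one_pow]
    · exact absurd (le_trans hAB.le h2) h1
    · rw [if_neg h1, if_neg h2, if_neg (by simp [Finset.mem_Ico]; omega),
        sub_self, abs_zero, zero_pow hp.ne']
  have hsub : Finset.Ico A B ⊆ Finset.range n := by
    intro x hx; simp only [Finset.mem_Ico] at hx; simp only [Finset.mem_range]; omega
  rw [Finset.sum_congr rfl h, Finset.sum_ite_mem,
    Finset.inter_eq_right.mpr hsub, Finset.sum_const, Nat.card_Ico,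
    nsmul_eq_mul, mul_one, Nat.cast_sub hAB.le]

lemma aux2 (p n A B : ℕ) (hp : 0 < p) (hAB : A ≠ B) (hA : A < n) (hB : B < n) :
    ∑ i ∈ Finset.range n,
      |(if A ≤ i then (1:ℝ) else 0) - (if B ≤ i then (1:ℝ) else 0)| ^ p
      = |(A : ℝ) - B| := by
  rcases lt_or_gt_of_ne hAB with h | h
  · rw [aux1 p n A B hp h hB, abs_sub_comm,
      abs_of_nonneg (by simp [Nat.cast_le, h.le] : (0:ℝ) ≤ (B:ℝ) - A)]
  · have hc : ∀ i ∈ Finset.range n,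
        |(if A ≤ i then (1:ℝ) else 0) - (if B ≤ i then (1:ℝ) else 0)| ^ p
          = |(if B ≤ i then (1:ℝ) else 0) - (if A ≤ i then (1:ℝ) else 0)| ^ p := by
      intro i _; rw [abs_sub_comm]
    rw [Finset.sum_congr rfl hc, aux1 p n B A hp h hA,
      abs_of_nonneg (by simp [Nat.cast_le, h.le] : (0:ℝ) ≤ (A:ℝ) - B)]

/-- Reduction from Minimum Linear Arrangement. Let `G` have vertices
`0,…,n-1` and edges `e 0,…,e (m-1)` (each `(e j).1 < (e j).2 < n`, pairwise
distinct), and let `F` be the `(m+1)`-time series with `F i 1 = m` and the `±1`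
updates per edge. Then for any permutation `π` of the vertex indices (with `πinv` its
inverse, so `πinv v` is the position of vertex `v`) and any integer `p ≥ 1`,
`∑_{i=1}^n ∑_{j=1}^m |W_{i,j}|^p = ∑_{edges} |pos(u) - pos(v)|`. -/
theorem stmt_13 (p n m : ℕ) (hp : 0 < p)
    (e : ℕ → ℕ × ℕ)
    (hedge : ∀ j < m, (e j).1 < (e j).2 ∧ (e j).2 < n)
    (hinj : ∀ j < m, ∀ j' < m, e j = e j' → j = j')
    (F : ℕ → ℕ → ℝ)
    (hF1 : ∀ i < n, F i 1 = (m : ℝ))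
    (hFstep : ∀ i < n, ∀ j < m,
      F i (j + 2) = F i (j + 1) +
        (if i = (e j).1 then 1 else if i = (e j).2 then -1 else 0))
    (π πinv : ℕ → ℕ)
    (hperm : Multiset.map π (Multiset.range n) = Multiset.range n)
    (hinv : ∀ k < n, πinv (π k) = k ∧ π (πinv k) = k) :
    ∑ i ∈ Finset.range n, ∑ j ∈ Finset.Icc 1 m,
        |∑ k ∈ Finset.range (i + 1), (F (π k) (j + 1) - F (π k) j)| ^ p =
      ∑ j ∈ Finset.range m, |((πinv (e j).1 : ℝ) - (πinv (e j).2 : ℝ))| := by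
  have hπmem : ∀ k < n, π k < n := by
    intro k hk
    have : π k ∈ Multiset.map π (Multiset.range n) :=
      Multiset.mem_map.mpr ⟨k, Multiset.mem_range.mpr hk, rfl⟩
    rw [hperm, Multiset.mem_range] at this; exact this
  have hπinvmem : ∀ v < n, πinv v < n := by
    intro v hv
    have : v ∈ Multiset.map π (Multiset.range n) := by
      rw [hperm]; exact Multiset.mem_range.mpr hv
    obtain ⟨k, hk, hπk⟩ := Multiset.mem_map.mp this
    rw [Multiset.mem_range] at hk
    rw [← hπk, (hinv k hk).1]; exact hk
  rw [Finset.sum_comm]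
  have hreind : (Finset.Icc 1 m) = Finset.map ⟨fun j => j + 1, add_left_injective 1⟩
      (Finset.range m) := by
    ext x
    simp only [Finset.mem_Icc, Finset.mem_map, Finset.mem_range,
      Function.Embedding.coeFn_mk]
    constructor
    · rintro ⟨h1, h2⟩; exact ⟨x - 1, by omega, by omega⟩
    · rintro ⟨c, hc, rfl⟩; omega
  rw [hreind, Finset.sum_map]
  apply Finset.sum_congr rfl
  intro j hj
  rw [Finset.mem_range] at hj
  simp only [Function.Embedding.coeFn_mk]
  obtain ⟨hab, hbn⟩ := hedge j hj
  have han : (e j).1 < n := lt_trans hab hbn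
  have hAn : πinv (e j).1 < n := hπinvmem _ han
  have hBn : πinv (e j).2 < n := hπinvmem _ hbn
  have hABne : πinv (e j).1 ≠ πinv (e j).2 := by
    intro h
    have h1 := (hinv (e j).1 han).2
    have h2 := (hinv (e j).2 hbn).2
    rw [h, h2] at h1
    omega
  have key : ∀ i ∈ Finset.range n,
      |∑ k ∈ Finset.range (i + 1), (F (π k) (j + 1 + 1) - F (π k) (j + 1))| ^ p
        = |(if πinv (e j).1 ≤ i then (1:ℝ) else 0) -
            (if πinv (e j).2 ≤ i then (1:ℝ) else 0)| ^ p := by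
    intro i hi
    rw [Finset.mem_range] at hi
    congr 2
    have hterm : ∀ k ∈ Finset.range (i + 1),
        F (π k) (j + 1 + 1) - F (π k) (j + 1)
          = (if k = πinv (e j).1 then (1:ℝ) else 0) -
            (if k = πinv (e j).2 then (1:ℝ) else 0) := by
      intro k hk
      rw [Finset.mem_range] at hk
      have hkn : k < n := by omega
      have hπkn : π k < n := hπmem k hkn
      have hs := hFstep (π k) hπkn j hj
      rw [show j + 1 + 1 = j + 2 from rfl, hs]
      have heqa : (π k = (e j).1) = (k = πinv (e j).1) := by
        apply propext; constructor
        · intro h; rw [← h, (hinv k hkn).1]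
        · intro h; rw [h, (hinv (e j).1 han).2]
      have heqb : (π k = (e j).2) = (k = πinv (e j).2) := by
        apply propext; constructor
        · intro h; rw [← h, (hinv k hkn).1]
        · intro h; rw [h, (hinv (e j).2 hbn).2]
      rw [add_sub_cancel_left]; simp only [heqa, heqb]
      by_cases h1 : k = πinv (e j).1 <;> by_cases h2 : k = πinv (e j).2
      · omega
      · simp [h1, h2, hABne, Ne.symm hABne]
      · simp [h1, h2, hABne, Ne.symm hABne]
      · simp [h1, h2, hABne, Ne.symm hABne]
    rw [Finset.sum_congr rfl hterm, Finset.sum_sub_distrib,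
      Finset.sum_ite_eq' (Finset.range (i+1)) (πinv (e j).1) (fun _ => (1:ℝ)),
      Finset.sum_ite_eq' (Finset.range (i+1)) (πinv (e j).2) (fun _ => (1:ℝ))]
    simp [Nat.lt_succ_iff]
  rw [Finset.sum_congr rfl key]
  exact aux2 p n _ _ hp hABne hAn hBn
end

section
/- Let m be a positive even integer and let S consist of m² copies of T = {1 (2m times), m²−m (twice), −2m²}. The permutation π* consisting of m² copies of the block (1,…,1 [m ones], m²−m, −2m², m²−m, 1,…,1 [m ones]) satisfies ∑_{i=1}^{|S|} |P_i^{π*}| = m²(m(m+1) + 2m²) = O(m⁴). -/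
open Finset

/-- prefix-sum profile within a period -/
noncomputable def Fprof (m r : ℕ) : ℝ :=
  if r ≤ m then (r : ℝ)
  else if r = m + 1 then (m : ℝ) ^ 2
  else if r = m + 2 then -(m : ℝ) ^ 2
  else (r : ℝ) - 2 * m - 3

lemma Fp_le (m r : ℕ) (h : r ≤ m) : Fprof m r = r := by
  simp only [Fprof, if_pos h]

lemma Fp_m1 (m : ℕ) : Fprof m (m + 1) = (m : ℝ) ^ 2 := by
  simp [Fprof]

lemma Fp_m2 (m : ℕ) : Fprof m (m + 2) = -(m : ℝ) ^ 2 := by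
  simp [Fprof]

lemma Fp_big (m r : ℕ) (h : m + 2 < r) : Fprof m r = (r : ℝ) - 2 * m - 3 := by
  simp only [Fprof]
  rw [if_neg (by omega), if_neg (by omega), if_neg (by omega)]

lemma sum_one_aux (n : ℕ) : ∑ j ∈ range n, ((j : ℝ) + 1) = n * (n + 1) / 2 := by
  induction n with
  | zero => simp
  | succ n ih => rw [Finset.sum_range_succ, ih]; push_cast; ring

lemma sum_two_aux (n : ℕ) : ∑ j ∈ range n, ((n : ℝ) - j) = n * (n + 1) / 2 := by
  induction n with
  | zero => simp
  | succ n ih =>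
    rw [Finset.sum_range_succ]
    have h : ∀ j ∈ range n, ((n : ℝ) + 1 - j) = ((n : ℝ) - j) + 1 := by
      intro j _; ring
    push_cast
    rw [Finset.sum_congr rfl h, Finset.sum_add_distrib, Finset.sum_const, ih,
      Finset.card_range, nsmul_eq_mul]
    push_cast
    ring

lemma F_step (m : ℕ) (hm : 0 < m) (π : ℕ → ℝ)
    (hπ : ∀ i, π i =
      (if i % (2 * m + 3) < m then (1 : ℝ)
        else if i % (2 * m + 3) = m then (m : ℝ) ^ 2 - m
        else if i % (2 * m + 3) = m + 1 then -2 * (m : ℝ) ^ 2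
        else if i % (2 * m + 3) = m + 2 then (m : ℝ) ^ 2 - m
        else 1)) (i : ℕ) :
    Fprof m ((i + 1) % (2 * m + 3)) = Fprof m (i % (2 * m + 3)) + π i := by
  rw [hπ i]
  set r := i % (2 * m + 3) with hrdef
  have hr : r < 2 * m + 3 := Nat.mod_lt _ (by omega)
  have hsucc : (i + 1) % (2 * m + 3) = (r + 1) % (2 * m + 3) := by
    rw [hrdef, Nat.add_mod, Nat.mod_eq_of_lt (show 1 < 2 * m + 3 by omega)]
  rw [hsucc]
  by_cases h1 : r < m
  · rw [Nat.mod_eq_of_lt (show r + 1 < 2 * m + 3 by omega),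
      Fp_le m (r + 1) (by omega), Fp_le m r (by omega), if_pos h1]
    push_cast; ring
  by_cases h2 : r = m
  · rw [if_neg h1, if_pos h2, h2, Nat.mod_eq_of_lt (show m + 1 < 2 * m + 3 by omega),
      Fp_m1, Fp_le m m le_rfl]
    ring
  by_cases h3 : r = m + 1
  · rw [if_neg h1, if_neg h2, if_pos h3, h3,
      Nat.mod_eq_of_lt (show m + 1 + 1 < 2 * m + 3 by omega),
      show m + 1 + 1 = m + 2 from rfl, Fp_m2, Fp_m1]
    ring
  by_cases h4 : r = m + 2
  · rw [if_neg h1, if_neg h2, if_neg h3, if_pos h4, h4,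
      Nat.mod_eq_of_lt (show m + 2 + 1 < 2 * m + 3 by omega),
      Fp_big m (m + 2 + 1) (by omega), Fp_m2]
    push_cast; ring
  by_cases h5 : r = 2 * m + 2
  · rw [if_neg h1, if_neg h2, if_neg h3, if_neg h4, h5,
      show 2 * m + 2 + 1 = 2 * m + 3 from rfl, Nat.mod_self,
      Fp_le m 0 (Nat.zero_le m), Fp_big m (2 * m + 2) (by omega)]
    push_cast; ring
  · rw [if_neg h1, if_neg h2, if_neg h3, if_neg h4,
      Nat.mod_eq_of_lt (show r + 1 < 2 * m + 3 by omega),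
      Fp_big m (r + 1) (by omega), Fp_big m r (by omega)]
    push_cast; ring

lemma prefix_eq (m : ℕ) (hm : 0 < m) (π : ℕ → ℝ)
    (hπ : ∀ i, π i =
      (if i % (2 * m + 3) < m then (1 : ℝ)
        else if i % (2 * m + 3) = m then (m : ℝ) ^ 2 - m
        else if i % (2 * m + 3) = m + 1 then -2 * (m : ℝ) ^ 2
        else if i % (2 * m + 3) = m + 2 then (m : ℝ) ^ 2 - m
        else 1)) (i : ℕ) :
    ∑ j ∈ range i, π j = Fprof m (i % (2 * m + 3)) := by
  induction i with
  | zero => simp [Fprof]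
  | succ i ih =>
    rw [Finset.sum_range_succ, ih, ← F_step m hm π hπ i]

lemma per_sum (m : ℕ) (k : ℕ) :
    ∑ i ∈ range (k * (2 * m + 3)), |Fprof m ((i + 1) % (2 * m + 3))| =
      k * ∑ j ∈ range (2 * m + 3), |Fprof m ((j + 1) % (2 * m + 3))| := by
  induction k with
  | zero => simp
  | succ k ih =>
    rw [add_mul, one_mul, Finset.sum_range_add, ih]
    have h : ∀ i, (k * (2 * m + 3) + i + 1) % (2 * m + 3) = (i + 1) % (2 * m + 3) := by
      intro i
      conv_lhs => rw [show k * (2 * m + 3) + i + 1 = (2 * m + 3) * k + (i + 1) by ring]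
      rw [Nat.mul_add_mod]
    simp only [h]
    push_cast
    ring

lemma blockB (m : ℕ) (hm : 0 < m) :
    ∑ j ∈ range (2 * m + 3), |Fprof m ((j + 1) % (2 * m + 3))| =
      (m : ℝ) * ((m : ℝ) + 1) + 2 * (m : ℝ) ^ 2 := by
  rw [show 2 * m + 3 = (2 * m + 2) + 1 by ring, Finset.sum_range_succ]
  have hlast : |Fprof m ((2 * m + 2 + 1) % (2 * m + 3))| = 0 := by
    rw [show 2 * m + 2 + 1 = 2 * m + 3 from rfl, Nat.mod_self, Fp_le m 0 (Nat.zero_le m)]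
    simp
  rw [hlast, add_zero]
  have hcong : ∀ j ∈ range (2 * m + 2),
      |Fprof m ((j + 1) % (2 * m + 3))| = |Fprof m (j + 1)| := by
    intro j hj
    rw [Finset.mem_range] at hj
    rw [Nat.mod_eq_of_lt (by omega)]
  rw [Finset.sum_congr rfl hcong]
  rw [show 2 * m + 2 = m + (m + 2) by ring, Finset.sum_range_add]
  have e1 : ∀ j ∈ range m, |Fprof m (j + 1)| = (j : ℝ) + 1 := by
    intro j hj
    rw [Finset.mem_range] at hj
    rw [Fp_le m (j + 1) (by omega), abs_of_nonneg (by positivity)]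
    push_cast; ring
  rw [Finset.sum_congr rfl e1, sum_one_aux]
  rw [show m + 2 = 2 + m by ring, Finset.sum_range_add]
  rw [Finset.sum_range_succ, Finset.sum_range_succ, Finset.sum_range_zero]
  have e2 : |Fprof m (m + 0 + 1)| = (m : ℝ) ^ 2 := by
    rw [show m + 0 + 1 = m + 1 by ring, Fp_m1, abs_of_nonneg (by positivity)]
  have e3 : |Fprof m (m + 1 + 1)| = (m : ℝ) ^ 2 := by
    rw [show m + 1 + 1 = m + 2 by ring, Fp_m2, abs_neg, abs_of_nonneg (by positivity)]
  have e4 : ∀ i ∈ range m, |Fprof m (m + (2 + i) + 1)| = (m : ℝ) - i := by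
    intro i hi
    rw [Finset.mem_range] at hi
    rw [Fp_big m (m + (2 + i) + 1) (by omega)]
    have h : ((m + (2 + i) + 1 : ℕ) : ℝ) - 2 * m - 3 = -((m : ℝ) - i) := by
      push_cast; ring
    rw [h, abs_neg, abs_of_nonneg (sub_nonneg.mpr (by exact_mod_cast hi.le))]
  rw [Finset.sum_congr rfl e4, sum_two_aux, e2, e3]
  ring

/-- With `S = m²` copies of `T = {1 (2m times), m²-m (twice), -2m²}`
(`m` even and positive), the permutation `π*` consisting of `m²` copies of the block
`(1,…,1 [m ones], m²-m, -2m², m²-m, 1,…,1 [m ones])` has sum of absolute prefix sums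
exactly `m²(m(m+1) + 2m²)`. -/
theorem stmt_16 (m : ℕ) (hm : 0 < m) (hme : Even m) (π : ℕ → ℝ)
    (hπ : ∀ i, π i =
      (if i % (2 * m + 3) < m then (1 : ℝ)
        else if i % (2 * m + 3) = m then (m : ℝ) ^ 2 - m
        else if i % (2 * m + 3) = m + 1 then -2 * (m : ℝ) ^ 2
        else if i % (2 * m + 3) = m + 2 then (m : ℝ) ^ 2 - m
        else 1)) :
    ∑ i ∈ Finset.range (m ^ 2 * (2 * m + 3)), |∑ j ∈ Finset.range (i + 1), π j| =
      (m : ℝ) ^ 2 * ((m : ℝ) * ((m : ℝ) + 1) + 2 * (m : ℝ) ^ 2) := by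
  have hcong : ∀ i ∈ Finset.range (m ^ 2 * (2 * m + 3)),
      |∑ j ∈ Finset.range (i + 1), π j| = |Fprof m ((i + 1) % (2 * m + 3))| := by
    intro i _
    rw [prefix_eq m hm π hπ (i + 1)]
  rw [Finset.sum_congr rfl hcong, per_sum m (m ^ 2), blockB m hm]
  push_cast
  ring
end

section
/- The BestFirst greedy heuristic for Min-∑|Prefixsum| has approximation factor at least Ω(∛n): there exists an infinite family of instances S with |S| = n = 3m² + 2m³ on which BestFirst returns a solution of value Ω(m⁵) while the optimum is O(m⁴). -/
private lemma map_range_getD (L : List ℝ) :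
    (List.range L.length).map (fun i => L.getD i 0) = L := by
  induction L with
  | nil => simp
  | cons a l ih =>
    rw [List.length_cons, List.range_succ_eq_map, List.map_cons, List.map_map]
    have h2 : ((fun i => (a :: l).getD i 0) ∘ Nat.succ) = fun i => l.getD i 0 := by
      funext i; simp [Function.comp]
    rw [h2, ih]
    simp

private lemma sum_range_getD (L : List ℝ) : ∀ k, ∑ j ∈ Finset.range k, L.getD j 0 = (L.take k).sum := by
  induction L with
  | nil => intro k; simp
  | cons a l ih =>
    intro k
    cases k with
    | zero => simp
    | succ k =>
      rw [Finset.sum_range_succ', List.take_succ_cons, List.sum_cons]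
      simp only [List.getD_cons_succ, List.getD_cons_zero]
      rw [ih k]; ring

private noncomputable def costL (s : ℝ) (L : List ℝ) : ℝ :=
  ∑ i ∈ Finset.range L.length, |s + (L.take (i+1)).sum|

private lemma costL_nil (s : ℝ) : costL s [] = 0 := by simp [costL]

private lemma costL_cons (s x : ℝ) (xs : List ℝ) :
    costL s (x :: xs) = |s + x| + costL (s + x) xs := by
  unfold costL
  rw [List.length_cons, Finset.sum_range_succ']
  simp only [List.take_succ_cons, List.sum_cons]
  rw [add_comm]
  congr 1
  · simp
  · apply Finset.sum_congr rfl; intro i _; ring_nf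

private lemma costL_append (A B : List ℝ) : ∀ s, costL s (A ++ B) = costL s A + costL (s + A.sum) B := by
  induction A with
  | nil => intro s; simp [costL_nil]
  | cons a l ih =>
    intro s
    rw [List.cons_append, costL_cons, ih, costL_cons, List.sum_cons, add_assoc, add_assoc]

private lemma costL_replicate (c : ℝ) : ∀ (k : ℕ) (s : ℝ),
    costL s (List.replicate k c) = ∑ j ∈ Finset.range k, |s + ((j : ℝ) + 1) * c| := by
  intro k
  induction k with
  | zero => intro s; simp [costL_nil]
  | succ k ih =>
    intro s
    rw [List.replicate_succ, costL_cons, ih, Finset.sum_range_succ']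
    rw [add_comm]
    congr 1
    · apply Finset.sum_congr rfl; intro i _; push_cast; ring_nf
    · norm_num

private lemma costL_join_replicate (B : List ℝ) (hB : B.sum = 0) : ∀ k : ℕ,
    costL 0 ((List.replicate k B).flatten) = k * costL 0 B := by
  intro k
  induction k with
  | zero => simp [costL_nil]
  | succ k ih =>
    rw [List.replicate_succ, List.flatten_cons, costL_append, hB, add_zero, ih]
    push_cast; ring

private lemma coe_join_replicate (B : List ℝ) : ∀ k : ℕ,
    ((List.replicate k B).flatten : Multiset ℝ) = k • (B : Multiset ℝ) := by
  intro k
  induction k with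
  | zero => simp
  | succ k ih =>
    rw [List.replicate_succ, List.flatten_cons]
    rw [succ_nsmul, add_comm (k • (B : Multiset ℝ)), ← Multiset.coe_add, ih]

private lemma length_join_replicate (B : List ℝ) : ∀ k : ℕ,
    ((List.replicate k B).flatten).length = k * B.length := by
  intro k
  induction k with
  | zero => simp
  | succ k ih => rw [List.replicate_succ, List.flatten_cons, List.length_append, ih]; ring

private lemma range_le_range {p q : ℕ} (h : p ≤ q) : Multiset.range p ≤ Multiset.range q := by
  induction h with
  | refl => exact le_refl _
  | step h ih => exact le_trans ih (by rw [Multiset.range_succ]; exact Multiset.le_cons_self _ _)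

set_option maxHeartbeats 1000000 in
/-- The BestFirst greedy heuristic for Min-∑|Prefixsum| has approximation
factor at least `Ω(∛n)`: there are constants `c₁, c₂ > 0` and, for every positive even
`m`, an instance `S` with `|S| = n = 3m² + 2m³` on which every BestFirst run returns a
solution of value at least `c₁·m⁵` while some solution has value at most `c₂·m⁴`. -/
theorem stmt_17 :
    ∃ c₁ c₂ : ℝ, 0 < c₁ ∧ 0 < c₂ ∧
      ∀ m : ℕ, Even m → 0 < m →
        ∃ S : Multiset ℝ, Multiset.card S = 3 * m ^ 2 + 2 * m ^ 3 ∧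
          (∀ π : ℕ → ℝ,
            Multiset.map π (Multiset.range (3 * m ^ 2 + 2 * m ^ 3)) = S →
            (∀ i < 3 * m ^ 2 + 2 * m ^ 3,
              ∀ v ∈ S - Multiset.map π (Multiset.range i),
                |(∑ j ∈ Finset.range i, π j) + π i| ≤
                  |(∑ j ∈ Finset.range i, π j) + v|) →
            c₁ * (m : ℝ) ^ 5 ≤
              ∑ i ∈ Finset.range (3 * m ^ 2 + 2 * m ^ 3),
                |∑ j ∈ Finset.range (i + 1), π j|) ∧
          (∃ π : ℕ → ℝ,
            Multiset.map π (Multiset.range (3 * m ^ 2 + 2 * m ^ 3)) = S ∧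
            ∑ i ∈ Finset.range (3 * m ^ 2 + 2 * m ^ 3),
                |∑ j ∈ Finset.range (i + 1), π j| ≤ c₂ * (m : ℝ) ^ 4) := by
  classical
  refine ⟨1/2, 5, by norm_num, by norm_num, ?_⟩
  intro m hme hm
  have hm2 : 2 ≤ m := Nat.le_of_dvd hm hme.two_dvd
  have hmR : (2:ℝ) ≤ (m:ℝ) := by exact_mod_cast hm2
  have hmpos : (0:ℝ) < m := by linarith
  set n : ℕ := 3 * m ^ 2 + 2 * m ^ 3 with hn
  obtain ⟨u, hu⟩ : ∃ u : ℝ, u = ((m:ℝ))⁻¹ := ⟨_, rfl⟩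
  obtain ⟨μ, hμ⟩ : ∃ μ : ℝ, μ = (m:ℝ)^2 - 1/2 := ⟨_, rfl⟩
  obtain ⟨D, hD⟩ : ∃ D : ℝ, D = -(2*(m:ℝ)^2) := ⟨_, rfl⟩
  have hu0 : 0 < u := by rw [hu]; positivity
  have hum : (m:ℝ) * u = 1 := by rw [hu]; exact mul_inv_cancel₀ (ne_of_gt hmpos)
  have hm3u : ((m:ℝ)^3) * u = (m:ℝ)^2 := by
    rw [pow_succ, mul_assoc, hum, mul_one]
  -- nat inequalities
  have hp2 : 0 < m^2 := pow_pos hm 2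
  have hp3 : 0 < m^3 := pow_pos hm 3
  have hn1 : m^3 < n := by rw [hn]; nlinarith
  have hn2 : 2 * m^3 ≤ n := by rw [hn]; nlinarith
  obtain ⟨S, hS⟩ : ∃ S : Multiset ℝ, S = Multiset.replicate (m^3) (0:ℝ) + Multiset.replicate (m^3) u +
      Multiset.replicate (2*m^2) μ + Multiset.replicate (m^2) D := ⟨_, rfl⟩
  have hSsplit0 : ∀ i ≤ m^3, S - Multiset.replicate i (0:ℝ) =
      Multiset.replicate (m^3 - i) (0:ℝ) + Multiset.replicate (m^3) u +
      Multiset.replicate (2*m^2) μ + Multiset.replicate (m^2) D := by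
    intro i hi
    have h1 : S = Multiset.replicate i (0:ℝ) +
        (Multiset.replicate (m^3 - i) (0:ℝ) + Multiset.replicate (m^3) u +
         Multiset.replicate (2*m^2) μ + Multiset.replicate (m^2) D) := by
      rw [hS, show Multiset.replicate (m^3) (0:ℝ) = Multiset.replicate i 0 + Multiset.replicate (m^3 - i) 0 from by
        rw [← Multiset.replicate_add]; congr 1; omega]
      abel
    rw [h1, add_tsub_cancel_left]
  have hSsplit1 : ∀ t ≤ m^3, S - (Multiset.replicate (m^3) (0:ℝ) + Multiset.replicate t u) =
      Multiset.replicate (m^3 - t) u + Multiset.replicate (2*m^2) μ + Multiset.replicate (m^2) D := by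
    intro t ht
    have h1 : S = (Multiset.replicate (m^3) (0:ℝ) + Multiset.replicate t u) +
        (Multiset.replicate (m^3 - t) u + Multiset.replicate (2*m^2) μ + Multiset.replicate (m^2) D) := by
      rw [hS, show Multiset.replicate (m^3) u = Multiset.replicate t u + Multiset.replicate (m^3 - t) u from by
        rw [← Multiset.replicate_add]; congr 1; omega]
      abel
    rw [h1, add_tsub_cancel_left]
  refine ⟨S, ?_, ?_, ?_⟩
  · rw [hS]; simp [Multiset.card_replicate]; ring
  · -- greedy lower bound
    intro π hπ hgreedy
    have hmem : ∀ i, i < n → π i ∈ S - Multiset.map π (Multiset.range i) := by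
      intro i hi
      have h1 : Multiset.map π (Multiset.range (i+1)) ≤ S := by
        rw [← hπ]; exact Multiset.map_le_map (range_le_range hi)
      have h2 : Multiset.map π (Multiset.range (i+1)) = π i ::ₘ Multiset.map π (Multiset.range i) := by
        rw [Multiset.range_succ, Multiset.map_cons]
      rw [← Multiset.count_pos, Multiset.count_sub]
      have h3 := Multiset.count_le_of_le (π i) h1
      rw [h2, Multiset.count_cons_self] at h3
      omega
    have claim0 : ∀ i, i ≤ m^3 → (∀ j, j < i → π j = 0) ∧
        Multiset.map π (Multiset.range i) = Multiset.replicate i (0:ℝ) := by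
      intro i
      induction i with
      | zero => intro _; exact ⟨fun j hj => absurd hj (Nat.not_lt_zero j), by simp⟩
      | succ i ih =>
        intro hi
        obtain ⟨hpt, hmap⟩ := ih (Nat.le_of_succ_le hi)
        have hilt : i < n := by omega
        have hP : ∑ j ∈ Finset.range i, π j = 0 :=
          Finset.sum_eq_zero (fun j hj => hpt j (Finset.mem_range.mp hj))
        have hv0 : (0:ℝ) ∈ S - Multiset.map π (Multiset.range i) := by
          rw [hmap, hSsplit0 i (by omega)]
          refine Multiset.mem_add.mpr (Or.inl (Multiset.mem_add.mpr (Or.inl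
            (Multiset.mem_add.mpr (Or.inl ?_)))))
          exact Multiset.mem_replicate.mpr ⟨by omega, rfl⟩
        have hg := hgreedy i hilt 0 hv0
        rw [hP] at hg
        simp only [zero_add, add_zero, abs_zero] at hg
        have hπi : π i = 0 := abs_nonpos_iff.mp hg
        constructor
        · intro j hj
          rcases Nat.lt_succ_iff_lt_or_eq.mp hj with h | h
          · exact hpt j h
          · rw [h, hπi]
        · rw [Multiset.range_succ, Multiset.map_cons, hmap, hπi, ← Multiset.replicate_succ]
    have hPcalc : ∀ t, t ≤ m^3 → (∀ j, j < m^3 + t → π j = if j < m^3 then 0 else u) →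
        ∑ j ∈ Finset.range (m^3 + t), π j = t * u := by
      intro t ht hpt
      rw [Finset.range_eq_Ico, ← Finset.sum_Ico_consecutive π (Nat.zero_le (m^3)) (Nat.le_add_right _ t)]
      have e1 : ∑ j ∈ Finset.Ico 0 (m^3), π j = 0 := by
        apply Finset.sum_eq_zero
        intro j hj
        have hj' : j < m^3 := (Finset.mem_Ico.mp hj).2
        rw [hpt j (by omega), if_pos hj']
      have e2 : ∑ j ∈ Finset.Ico (m^3) (m^3+t), π j = t * u := by
        rw [Finset.sum_Ico_eq_sum_range]
        simp only [Nat.add_sub_cancel_left]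
        have e3 : ∀ k ∈ Finset.range t, π (m^3 + k) = u := by
          intro k hk
          have hk' : k < t := Finset.mem_range.mp hk
          rw [hpt (m^3 + k) (by omega), if_neg (by omega)]
        rw [Finset.sum_congr rfl e3, Finset.sum_const, Finset.card_range, nsmul_eq_mul]
      rw [e1, e2, zero_add]
    have claim1 : ∀ t, t ≤ m^3 → (∀ j, j < m^3 + t → π j = if j < m^3 then 0 else u) ∧
        Multiset.map π (Multiset.range (m^3 + t)) =
          Multiset.replicate (m^3) (0:ℝ) + Multiset.replicate t u := by
      intro t
      induction t with
      | zero =>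
        intro _
        obtain ⟨hpt, hmap⟩ := claim0 (m^3) le_rfl
        constructor
        · intro j hj
          rw [if_pos (by omega), hpt j (by omega)]
        · simpa using hmap
      | succ t ih =>
        intro ht
        obtain ⟨hpt, hmap⟩ := ih (by omega)
        have hilt : m^3 + t < n := by omega
        have hP : ∑ j ∈ Finset.range (m^3 + t), π j = t * u := hPcalc t (by omega) hpt
        have hrem : S - Multiset.map π (Multiset.range (m^3 + t)) =
            Multiset.replicate (m^3 - t) u + Multiset.replicate (2*m^2) μ +
            Multiset.replicate (m^2) D := by
          rw [hmap]; exact hSsplit1 t (by omega)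
        have hπmem := hmem (m^3 + t) hilt
        rw [hrem] at hπmem
        have humem : u ∈ S - Multiset.map π (Multiset.range (m^3 + t)) := by
          rw [hrem]
          refine Multiset.mem_add.mpr (Or.inl (Multiset.mem_add.mpr (Or.inl ?_)))
          exact Multiset.mem_replicate.mpr ⟨by omega, rfl⟩
        have hg := hgreedy (m^3 + t) hilt u humem
        rw [hP] at hg
        -- bounds on t*u
        have htu0 : (0:ℝ) ≤ t * u := by positivity
        have htle : ((t:ℝ) + 1) * u ≤ (m:ℝ)^2 := by
          have h1 : ((t:ℝ) + 1) ≤ ((m:ℝ)^3) := by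
            have : (t:ℕ) + 1 ≤ m^3 := by omega
            exact_mod_cast this
          calc ((t:ℝ) + 1) * u ≤ ((m:ℝ)^3) * u := by
                exact mul_le_mul_of_nonneg_right h1 (le_of_lt hu0)
            _ = (m:ℝ)^2 := hm3u
        have hπu : π (m^3 + t) = u := by
          rcases Multiset.mem_add.mp hπmem with h | h
          · rcases Multiset.mem_add.mp h with h' | h'
            · exact Multiset.eq_of_mem_replicate h'
            · exfalso
              have hv : π (m^3 + t) = μ := Multiset.eq_of_mem_replicate h'
              rw [hv] at hg
              rw [abs_of_nonneg (by rw [hμ]; nlinarith), abs_of_nonneg (by positivity)] at hg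
              rw [hμ] at hg
              have huhalf : u ≤ 1/2 := by
                rw [hu]
                rw [show (1:ℝ)/2 = (2:ℝ)⁻¹ by norm_num]
                exact inv_anti₀ (by norm_num) hmR
              nlinarith
          · exfalso
            have hv : π (m^3 + t) = D := Multiset.eq_of_mem_replicate h
            rw [hv] at hg
            have hneg : (t:ℝ) * u + D < 0 := by
              rw [hD]; nlinarith
            rw [abs_of_neg hneg, abs_of_nonneg (by positivity)] at hg
            rw [hD] at hg
            nlinarith
        constructor
        · intro j hj
          rcases Nat.lt_succ_iff_lt_or_eq.mp (by omega : j < (m^3 + t) + 1) with h | h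
          · exact hpt j h
          · rw [h, hπu, if_neg (by omega)]
        · have : m^3 + (t+1) = (m^3 + t) + 1 := by omega
          rw [this, Multiset.range_succ, Multiset.map_cons, hmap, hπu,
            Multiset.replicate_succ, ← Multiset.singleton_add, ← Multiset.singleton_add]
          abel
    -- now the lower bound on the cost
    have hptall : ∀ j, j < 2*m^3 → π j = if j < m^3 then 0 else u := by
      have := (claim1 (m^3) le_rfl).1
      intro j hj
      exact this j (by omega)
    have hterm : ∀ i ∈ Finset.Ico (m^3) (2*m^3),
        ((i + 1 - m^3 : ℕ) : ℝ) * u ≤ |∑ j ∈ Finset.range (i+1), π j| := by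
      intro i hi
      obtain ⟨hi1, hi2⟩ := Finset.mem_Ico.mp hi
      have e1 : i + 1 = m^3 + (i + 1 - m^3) := by omega
      have e2 : ∑ j ∈ Finset.range (i+1), π j = ((i + 1 - m^3 : ℕ) : ℝ) * u := by
        conv_lhs => rw [e1]
        exact hPcalc (i + 1 - m^3) (by omega) (fun j hj => hptall j (by omega))
      rw [e2, abs_of_nonneg (by positivity)]
    have hsub : Finset.Ico (m^3) (2*m^3) ⊆ Finset.range n := by
      intro x hx
      obtain ⟨_, h2⟩ := Finset.mem_Ico.mp hx
      exact Finset.mem_range.mpr (by omega)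
    have hstep1 : ∑ i ∈ Finset.Ico (m^3) (2*m^3), ((i + 1 - m^3 : ℕ) : ℝ) * u ≤
        ∑ i ∈ Finset.range n, |∑ j ∈ Finset.range (i+1), π j| := by
      calc ∑ i ∈ Finset.Ico (m^3) (2*m^3), ((i + 1 - m^3 : ℕ) : ℝ) * u
          ≤ ∑ i ∈ Finset.Ico (m^3) (2*m^3), |∑ j ∈ Finset.range (i+1), π j| :=
            Finset.sum_le_sum hterm
        _ ≤ ∑ i ∈ Finset.range n, |∑ j ∈ Finset.range (i+1), π j| :=
            Finset.sum_le_sum_of_subset_of_nonneg hsub (fun i _ _ => abs_nonneg _)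
    have hval : ∑ i ∈ Finset.Ico (m^3) (2*m^3), ((i + 1 - m^3 : ℕ) : ℝ) * u =
        (∑ k ∈ Finset.range (m^3), ((k:ℝ) + 1)) * u := by
      rw [Finset.sum_Ico_eq_sum_range]
      rw [show 2*m^3 - m^3 = m^3 from by omega, ← Finset.sum_mul]
      congr 1
      apply Finset.sum_congr rfl
      intro k _
      congr 1
      rw [show m^3 + k + 1 - m^3 = k + 1 from by omega]
      push_cast; ring
    have hGauss : (∑ k ∈ Finset.range (m^3), ((k:ℝ) + 1)) * 2 = ((m^3 : ℝ) + 1) * (m^3 : ℝ) := by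
      have h1 : ∑ k ∈ Finset.range (m^3), (k + 1) = ∑ k ∈ Finset.range (m^3 + 1), k := by
        rw [Finset.sum_range_succ' (fun x => x) (m^3)]; simp
      have h2 : (∑ k ∈ Finset.range (m^3), (k + 1)) * 2 = (m^3 + 1) * m^3 := by
        rw [h1, Finset.sum_range_id_mul_two]; simp
      exact_mod_cast h2
    have key : ((m:ℝ)^3 + 1) * (m:ℝ)^3 * u = (m:ℝ)^5 + (m:ℝ)^2 := by
      linear_combination ((m:ℝ)^3 + 1) * hm3u
    have hsumval : (∑ k ∈ Finset.range (m^3), ((k:ℝ) + 1)) * u = ((m:ℝ)^5 + (m:ℝ)^2) / 2 := by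
      push_cast at hGauss
      have h2 : (∑ k ∈ Finset.range (m^3), ((k:ℝ) + 1)) = ((m:ℝ)^3 + 1) * (m:ℝ)^3 / 2 := by
        linarith
      rw [h2, div_mul_eq_mul_div, key]
    rw [hn]
    calc (1/2 : ℝ) * (m:ℝ)^5 ≤ ((m:ℝ)^5 + (m:ℝ)^2) / 2 := by linarith [sq_nonneg ((m:ℝ))]
      _ = (∑ k ∈ Finset.range (m^3), ((k:ℝ) + 1)) * u := hsumval.symm
      _ = ∑ i ∈ Finset.Ico (m^3) (2*m^3), ((i + 1 - m^3 : ℕ) : ℝ) * u := hval.symm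
      _ ≤ ∑ i ∈ Finset.range n, |∑ j ∈ Finset.range (i+1), π j| := hstep1
  · -- the good solution
    set B : List ℝ := μ :: μ :: D :: List.replicate m u with hB
    set L : List ℝ := List.replicate (m^3) (0:ℝ) ++ (List.replicate (m^2) B).flatten with hL
    have hBlen : B.length = m + 3 := by rw [hB]; simp
    have hLlen : L.length = 3 * m^2 + 2 * m^3 := by
      rw [hL, List.length_append, List.length_replicate, length_join_replicate, hBlen]
      ring
    have hBsum : B.sum = 0 := by
      rw [hB]
      simp only [List.sum_cons, List.sum_replicate, nsmul_eq_mul]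
      rw [hμ, hD]
      linear_combination hum
    refine ⟨fun i => L.getD i 0, ?_, ?_⟩
    · -- multiset equality
      have h0 : Multiset.map (fun i => L.getD i 0) (Multiset.range (3 * m^2 + 2 * m^3)) =
          ((List.range (3 * m^2 + 2 * m^3)).map (fun i => L.getD i 0) : Multiset ℝ) := rfl
      rw [h0, ← hLlen, map_range_getD]
      rw [hL]
      rw [show ((List.replicate (m^3) (0:ℝ) ++ (List.replicate (m^2) B).flatten : List ℝ) : Multiset ℝ)
          = (↑(List.replicate (m^3) (0:ℝ)) + ↑((List.replicate (m^2) B).flatten) : Multiset ℝ) from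
        by rw [← Multiset.coe_add]]
      rw [coe_join_replicate, Multiset.coe_replicate, hB]
      rw [show ((μ :: μ :: D :: List.replicate m u : List ℝ) : Multiset ℝ)
          = {μ} + ({μ} + ({D} + Multiset.replicate m u)) from by
        rw [← Multiset.cons_coe, ← Multiset.cons_coe, ← Multiset.cons_coe,
          Multiset.coe_replicate, ← Multiset.singleton_add, ← Multiset.singleton_add,
          ← Multiset.singleton_add]]
      rw [hS]
      simp only [smul_add, Multiset.nsmul_replicate]
      rw [show Multiset.replicate (m^2 * m) u = Multiset.replicate (m^3) u from by
        rw [show m^2 * m = m^3 from by ring]]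
      have hs1 : m^2 • ({μ} : Multiset ℝ) = Multiset.replicate (m^2) μ := by
        rw [show ({μ} : Multiset ℝ) = Multiset.replicate 1 μ from by simp,
          Multiset.nsmul_replicate, mul_one]
      have hs2 : m^2 • ({D} : Multiset ℝ) = Multiset.replicate (m^2) D := by
        rw [show ({D} : Multiset ℝ) = Multiset.replicate 1 D from by simp,
          Multiset.nsmul_replicate, mul_one]
      rw [hs1, hs2]
      rw [show Multiset.replicate (2*m^2) μ = Multiset.replicate (m^2 + m^2) μ from by congr 1; ring,
        Multiset.replicate_add]
      abel
    · -- cost bound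
      have hrw : ∀ i, ∑ j ∈ Finset.range (i+1), L.getD j 0 = (L.take (i+1)).sum :=
        fun i => sum_range_getD L (i+1)
      have hgoal : ∑ i ∈ Finset.range (3 * m^2 + 2 * m^3), |∑ j ∈ Finset.range (i+1), L.getD j 0|
          = costL 0 L := by
        unfold costL
        rw [hLlen]
        apply Finset.sum_congr rfl
        intro i _
        rw [hrw i, zero_add]
      rw [hgoal]
      rw [hL, costL_append, List.sum_replicate, smul_zero, add_zero]
      have hz : costL 0 (List.replicate (m^3) (0:ℝ)) = 0 := by
        rw [costL_replicate]
        apply Finset.sum_eq_zero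
        intro j _
        simp
      rw [hz, zero_add, costL_join_replicate B hBsum]
      -- cost of one block
      have hones : costL (0 + μ + μ + D) (List.replicate m u) ≤ m := by
        have hstart : (0:ℝ) + μ + μ + D = -1 := by rw [hμ, hD]; ring
        rw [hstart, costL_replicate]
        calc ∑ j ∈ Finset.range m, |(-1:ℝ) + ((j:ℝ) + 1) * u|
            ≤ ∑ j ∈ Finset.range m, (1:ℝ) := by
              apply Finset.sum_le_sum
              intro j hj
              have hj' : (j:ℝ) + 1 ≤ m := by
                have : (j:ℕ) + 1 ≤ m := Finset.mem_range.mp hj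
                exact_mod_cast this
              have h1 : ((j:ℝ) + 1) * u ≤ 1 := by
                calc ((j:ℝ) + 1) * u ≤ (m:ℝ) * u :=
                      mul_le_mul_of_nonneg_right hj' (le_of_lt hu0)
                  _ = 1 := hum
              have h2 : (0:ℝ) ≤ ((j:ℝ) + 1) * u := by positivity
              rw [abs_le]
              constructor <;> linarith
          _ = m := by rw [Finset.sum_const, Finset.card_range, nsmul_eq_mul, mul_one]
      have hblock : costL 0 B ≤ 3 * (m:ℝ)^2 + (m:ℝ) := by
        rw [hB, costL_cons, costL_cons, costL_cons]
        have e1 : |(0:ℝ) + μ| = μ := by rw [abs_of_nonneg (by rw [hμ]; nlinarith)]; ring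
        have e2 : |(0:ℝ) + μ + μ| = 2*μ := by
          rw [abs_of_nonneg (by rw [hμ]; nlinarith)]; ring
        have e3 : |(0:ℝ) + μ + μ + D| = 1 := by
          rw [show (0:ℝ) + μ + μ + D = -1 from by rw [hμ, hD]; ring]
          norm_num
        rw [e1, e2, e3]
        linarith [hones, hμ.le, hμ.ge]
      have hc : ((m^2 : ℕ) : ℝ) = (m:ℝ)^2 := by push_cast; ring
      rw [hc]
      calc (m:ℝ)^2 * costL 0 B ≤ (m:ℝ)^2 * (3 * (m:ℝ)^2 + (m:ℝ)) :=
            mul_le_mul_of_nonneg_left hblock (by positivity)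
        _ ≤ 5 * (m:ℝ)^4 := by
            nlinarith [mul_le_mul_of_nonneg_left hmR (by positivity : (0:ℝ) ≤ (m:ℝ)^3)]
end

section
/- Given a Partition instance Y = {y₁,…,yₙ} of positive integers with b = ∑ yᵢ, the OneInTwoPartition instance X = {(i·b + yᵢ, i·b) : i ∈ [n]} is a yes-instance (there exist disjoint sets X₁, X₂ of size n, each containing exactly one element from each pair, with ∑X₁ = ∑X₂) if and only if Y admits a subset Y' with ∑_{y∈Y'} y = b/2. -/
open Finset

section

variable {ι M : Type*} [AddCommGroup M] (s : Finset ι) (p : ι → Prop) [DecidablePred p]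
  (g y : ι → M)

theorem sum_ite_add_eq_sum_add_sum_filter :
    ∑ i ∈ s, (if p i then g i + y i else g i) = ∑ i ∈ s, g i + ∑ i ∈ s with p i, y i := by
  rw [sum_filter, ← sum_add_distrib]
  refine sum_congr rfl fun i _ => ?_
  split_ifs <;> simp

theorem sum_ite_add_eq_sum_ite_add_iff :
    ∑ i ∈ s, (if p i then g i + y i else g i) = ∑ i ∈ s, (if p i then g i else g i + y i) ↔
      ∑ i ∈ s with p i, y i + ∑ i ∈ s with p i, y i = ∑ i ∈ s, y i := by
  have hnot : ∑ i ∈ s, (if p i then g i else g i + y i) =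
      ∑ i ∈ s, g i + ∑ i ∈ s with ¬p i, y i := by
    rw [← sum_ite_add_eq_sum_add_sum_filter]
    simp only [ite_not]
  rw [sum_ite_add_eq_sum_add_sum_filter, hnot, add_right_inj,
    ← sum_filter_add_sum_filter_not s p y, add_right_inj, eq_comm]

end

theorem stmt_18_general (n : ℕ) (Y : ℕ → ℤ) (b : ℤ)
    (hb : b = ∑ i ∈ Finset.Icc 1 n, Y i) :
    (∃ f : ℕ → Bool,
      ∑ i ∈ Finset.Icc 1 n, (if f i then (i : ℤ) * b + Y i else (i : ℤ) * b) =
        ∑ i ∈ Finset.Icc 1 n, (if f i then (i : ℤ) * b else (i : ℤ) * b + Y i)) ↔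
    (∃ T ⊆ Finset.Icc 1 n, 2 * ∑ i ∈ T, Y i = b) := by
  simp only [sum_ite_add_eq_sum_ite_add_iff, ← two_mul, ← hb]
  constructor
  · rintro ⟨f, hf⟩
    exact ⟨_, filter_subset _ _, hf⟩
  · rintro ⟨T, hT, hsum⟩
    refine ⟨fun i => decide (i ∈ T), ?_⟩
    simpa only [decide_eq_true_eq, filter_mem_eq_inter, inter_eq_right.mpr hT] using hsum

/-- Correctness of the reduction from Partition to OneInTwoPartition:
for positive integers `Y 1,…,Y n` with `b = ∑ Y i`, one can choose exactly one element
from each pair `(i·b + Y i, i·b)` into `X₁` (the other into `X₂`) with `∑X₁ = ∑X₂`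
iff `Y` admits a subset summing to `b/2`. -/
theorem stmt_18 (n : ℕ) (Y : ℕ → ℤ) (b : ℤ)
    (hb : b = ∑ i ∈ Finset.Icc 1 n, Y i)
    (hpos : ∀ i ∈ Finset.Icc 1 n, 0 < Y i) :
    (∃ f : ℕ → Bool,
      ∑ i ∈ Finset.Icc 1 n, (if f i then (i : ℤ) * b + Y i else (i : ℤ) * b) =
        ∑ i ∈ Finset.Icc 1 n, (if f i then (i : ℤ) * b else (i : ℤ) * b + Y i)) ↔
    (∃ T ⊆ Finset.Icc 1 n, 2 * ∑ i ∈ T, Y i = b) :=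
  stmt_18_general n Y b hb
end
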